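/- arXiv:1806.03137 — 9 statements merged into one kernel-verified Lean document; each statement's English description precedes it below -/
import Mathlib

section
/- Let f ≥ 3 be an integer and let m ≥ 1 be a divisor of f. Then in ℚ[(ℤ/mℤ)ˣ] one has π_{f,m}(S_f) = (∏_{ℓ prime, ℓ ∣ f, ℓ ∤ m} (1 − [σ_ℓ]⁻¹)) · S_m, where the product runs over the finitely many prime numbers dividing f but not m. -/
open scoped BigOperators

/-- The Stickelberger element `S_f ∈ ℚ[(ℤ/fℤ)ˣ]`,
`S_f := −Σ_{1≤a≤f, gcd(a,f)=1} (a/f − 1/2)·[ā]⁻¹`. -/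
noncomputable def stickelberger (f : ℕ) : MonoidAlgebra ℚ (ZMod f)ˣ :=
  -(∑ a ∈ Finset.Icc 1 f,
      if h : Nat.Coprime a f then
        ((a : ℚ) / f - 1 / 2) • MonoidAlgebra.single ((ZMod.unitOfCoprime a h)⁻¹) (1 : ℚ)
      else 0)

/-- The map `π_{f,m} : ℚ[(ℤ/fℤ)ˣ] → ℚ[(ℤ/mℤ)ˣ]` induced by reduction mod `m`. -/
noncomputable def projMap (f m : ℕ) (h : m ∣ f) :
    MonoidAlgebra ℚ (ZMod f)ˣ →+* MonoidAlgebra ℚ (ZMod m)ˣ :=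
  MonoidAlgebra.mapDomainRingHom ℚ (ZMod.unitsMap h)

/-!
Reducing mod `m`, a unit `a` mod `f` contributes `[a mod m]⁻¹`, and `x ↦ [x]⁻¹` extends to a
multiplicative function `χ = invUnitSingle ℚ` on `ℤ/mℤ` vanishing off the units. So `π_{f,m}(S_f)`
is minus the sum of `(a/f − 1/2)·χ(a)` over `1 ≤ a ≤ f` prime to `f`. Remove the primes `ℓ ∣ f`
one at a time: after substituting `a = ℓb`, the terms with `ℓ ∣ a` are `χ(ℓ)` times the same sum
at level `f/ℓ`, which gives one factor `1 − χ(ℓ)` per prime (equal to `1` when `ℓ ∣ m`, since then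
`χ(ℓ) = 0`). What is left is the unrestricted sum of `(a/N − 1/2)·χ(a)` over `1 ≤ a ≤ N` for some
`m ∣ N`, and it does not depend on `N` (distribution relation): the `a ≡ c mod m` contribute
`Σ_{j<N/m} ((c + mj)/N − 1/2) = c/m − 1/2`.
-/

open Finset MonoidAlgebra

section invUnitSingle

variable (R : Type*) [Semiring R] {M : Type*} [CommMonoid M]

open Classical in
noncomputable def invUnitSingle (x : M) : MonoidAlgebra R Mˣ :=
  if h : IsUnit x then single h.unit⁻¹ 1 else 0

variable {R}

lemma invUnitSingle_units (u : Mˣ) : invUnitSingle R (u : M) = single u⁻¹ 1 := by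
  rw [invUnitSingle, dif_pos u.isUnit, IsUnit.unit_of_val_units]

lemma invUnitSingle_of_not_isUnit {x : M} (hx : ¬ IsUnit x) : invUnitSingle R x = 0 := by
  rw [invUnitSingle, dif_neg hx]

lemma invUnitSingle_mul (x y : M) :
    invUnitSingle R (x * y) = invUnitSingle R x * invUnitSingle R y := by
  by_cases hx : IsUnit x
  · by_cases hy : IsUnit y
    · lift x to Mˣ using hx
      lift y to Mˣ using hy
      rw [← Units.val_mul, invUnitSingle_units, invUnitSingle_units, invUnitSingle_units,
        single_mul_single, mul_inv, one_mul]
    · rw [invUnitSingle_of_not_isUnit hy,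
        invUnitSingle_of_not_isUnit fun h => hy (IsUnit.mul_iff.mp h).2, mul_zero]
  · rw [invUnitSingle_of_not_isUnit hx,
      invUnitSingle_of_not_isUnit fun h => hx (IsUnit.mul_iff.mp h).1, zero_mul]

lemma invUnitSingle_natCast_of_coprime {a m : ℕ} (h : a.Coprime m) :
    invUnitSingle R (a : ZMod m) = single (ZMod.unitOfCoprime a h)⁻¹ 1 :=
  invUnitSingle_units (ZMod.unitOfCoprime a h)

lemma invUnitSingle_natCast_of_not_coprime {a m : ℕ} (h : ¬ a.Coprime m) :
    invUnitSingle R (a : ZMod m) = 0 :=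
  invUnitSingle_of_not_isUnit ((ZMod.isUnit_iff_coprime a m).not.mpr h)

lemma invUnitSingle_natCast_eq_zero_of_prime_dvd {m ℓ : ℕ} (hℓ : ℓ.Prime) (hℓm : ℓ ∣ m) :
    invUnitSingle R (ℓ : ZMod m) = 0 :=
  invUnitSingle_natCast_of_not_coprime fun h => hℓ.coprime_iff_not_dvd.mp h hℓm

end invUnitSingle

lemma projMap_single_unitOfCoprime {f m a : ℕ} (hdvd : m ∣ f) (ha : a.Coprime f) :
    projMap f m hdvd (single (ZMod.unitOfCoprime a ha)⁻¹ 1) = invUnitSingle ℚ (a : ZMod m) := by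
  have ha' : a.Coprime m := ha.coprime_dvd_right hdvd
  have hunits : ZMod.unitsMap hdvd (ZMod.unitOfCoprime a ha) = ZMod.unitOfCoprime a ha' := by
    ext
    simp [ZMod.unitsMap_val, ZMod.cast_natCast hdvd]
  simp [projMap, hunits, invUnitSingle_natCast_of_coprime ha']

noncomputable def stickelbergerSum (m N d : ℕ) : MonoidAlgebra ℚ (ZMod m)ˣ :=
  ∑ a ∈ Icc 1 N with a.Coprime d, ((a : ℚ) / N - 1 / 2) • invUnitSingle ℚ (a : ZMod m)

lemma projMap_stickelberger {f m : ℕ} (hdvd : m ∣ f) :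
    projMap f m hdvd (stickelberger f) = -stickelbergerSum m f f := by
  rw [stickelberger, stickelbergerSum, map_neg, map_sum, sum_filter]
  congr 1
  refine sum_congr rfl fun a _ => ?_
  split_ifs with ha
  · rw [map_rat_smul, projMap_single_unitOfCoprime]
  · exact map_zero _

lemma stickelberger_eq_neg_stickelbergerSum (m : ℕ) :
    stickelberger m = -stickelbergerSum m m 1 := by
  rw [stickelberger, stickelbergerSum, filter_true_of_mem fun a _ => Nat.coprime_one_right a]
  congr 1
  refine sum_congr rfl fun a _ => ?_
  split_ifs with ha
  · rw [invUnitSingle_natCast_of_coprime ha]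
  · rw [invUnitSingle_natCast_of_not_coprime ha, smul_zero]

lemma sum_range_mul_eq_sum_sum {M : Type*} [AddCommMonoid M] (g : ℕ → M) (m k : ℕ) :
    ∑ a ∈ range (m * k), g a = ∑ j ∈ range k, ∑ c ∈ range m, g (m * j + c) := by
  induction k with
  | zero => simp
  | succ k ih => rw [mul_add_one, sum_range_add, ih, sum_range_succ]

lemma sum_Icc_one_eq_sum_range {M : Type*} [AddCommMonoid M] (g : ℕ → M) (n : ℕ) :
    ∑ a ∈ Icc 1 n, g a = ∑ a ∈ range n, g (a + 1) := by
  rw [range_eq_Ico, sum_Ico_add']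
  rfl

lemma sum_range_div_sub_half {m k : ℕ} (hm : m ≠ 0) (hk : k ≠ 0) (c : ℚ) :
    ∑ j ∈ range k, (((m * j : ℕ) + c) / (m * k : ℕ) - 1 / 2) = c / m - 1 / 2 := by
  have gauss : (∑ j ∈ range k, (j : ℚ)) * 2 = k * (k - 1) := by
    have h := congrArg (Nat.cast : ℕ → ℚ) (sum_range_id_mul_two k)
    push_cast [Nat.cast_sub (Nat.one_le_iff_ne_zero.mpr hk)] at h
    exact h
  simp only [sum_sub_distrib, ← sum_div, sum_add_distrib, Nat.cast_mul, ← mul_sum, sum_const,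
    card_range, nsmul_eq_mul]
  field_simp
  linear_combination (m : ℚ) * gauss

lemma stickelbergerSum_one_of_dvd {m N : ℕ} (hN : N ≠ 0) (hmN : m ∣ N) :
    stickelbergerSum m N 1 = stickelbergerSum m m 1 := by
  obtain ⟨k, rfl⟩ := hmN
  have hm : m ≠ 0 := left_ne_zero_of_mul hN
  have hk : k ≠ 0 := right_ne_zero_of_mul hN
  simp only [stickelbergerSum, Nat.coprime_one_right_eq_true, filter_true,
    sum_Icc_one_eq_sum_range]
  rw [sum_range_mul_eq_sum_sum, sum_comm]
  refine sum_congr rfl fun c _ => ?_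
  have periodic : ∀ j, ((m * j + c + 1 : ℕ) : ZMod m) = ((c + 1 : ℕ) : ZMod m) := fun j => by
    push_cast
    simp
  simp only [periodic, ← sum_smul]
  congr 1
  exact_mod_cast sum_range_div_sub_half hm hk (c + 1)

lemma sum_Icc_filter_dvd {M : Type*} [AddCommMonoid M] (g : ℕ → M) {ℓ k : ℕ} (hℓ : ℓ ≠ 0) :
    ∑ a ∈ Icc 1 (ℓ * k) with ℓ ∣ a, g a = ∑ b ∈ Icc 1 k, g (ℓ * b) := by
  symm
  refine sum_nbij' (ℓ * ·) (· / ℓ) (fun b hb => ?_) (fun a ha => ?_) (fun b _ => ?_)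
    (fun a ha => ?_) (fun _ _ => rfl)
  · simp only [mem_Icc, mem_filter, dvd_mul_right, and_true] at hb ⊢
    exact ⟨Nat.one_le_iff_ne_zero.mpr (mul_ne_zero hℓ (by omega)), Nat.mul_le_mul_left ℓ hb.2⟩
  · simp only [mem_Icc, mem_filter] at ha ⊢
    obtain ⟨⟨ha1, hak⟩, c, rfl⟩ := ha
    rw [Nat.mul_div_cancel_left c (Nat.pos_of_ne_zero hℓ)]
    exact ⟨Nat.one_le_iff_ne_zero.mpr (right_ne_zero_of_mul (Nat.one_le_iff_ne_zero.mp ha1)),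
      le_of_mul_le_mul_left hak (Nat.pos_of_ne_zero hℓ)⟩
  · exact Nat.mul_div_cancel_left b (Nat.pos_of_ne_zero hℓ)
  · simp only [mem_filter] at ha
    exact Nat.mul_div_cancel' ha.2

lemma stickelbergerSum_prime_mul {m N d ℓ : ℕ} (hℓ : ℓ.Prime) (hℓd : ¬ ℓ ∣ d) (hℓN : ℓ ∣ N) :
    stickelbergerSum m N (ℓ * d) =
      stickelbergerSum m N d - invUnitSingle ℚ (ℓ : ZMod m) * stickelbergerSum m (N / ℓ) d := by
  obtain ⟨k, rfl⟩ := hℓN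
  have hℓ0 : ℓ ≠ 0 := hℓ.ne_zero
  have hℓd_cop : ℓ.Coprime d := hℓ.coprime_iff_not_dvd.mpr hℓd
  have not_multiple : ∀ a, a.Coprime (ℓ * d) ↔ ¬ ℓ ∣ a ∧ a.Coprime d := fun a => by
    rw [Nat.coprime_mul_iff_right, Nat.coprime_comm, hℓ.coprime_iff_not_dvd]
  have multiple : ∑ a ∈ Icc 1 (ℓ * k) with a.Coprime d ∧ ℓ ∣ a,
      ((a : ℚ) / (ℓ * k : ℕ) - 1 / 2) • invUnitSingle ℚ (a : ZMod m) =
      invUnitSingle ℚ (ℓ : ZMod m) * stickelbergerSum m k d := by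
    rw [stickelbergerSum, mul_sum, ← filter_filter, filter_comm, sum_filter,
      sum_Icc_filter_dvd _ hℓ0, sum_filter]
    refine sum_congr rfl fun b _ => ?_
    have hcop : (ℓ * b).Coprime d ↔ b.Coprime d :=
      Nat.coprime_mul_iff_left.trans (and_iff_right hℓd_cop)
    by_cases hb : b.Coprime d
    · rw [if_pos (hcop.mpr hb), if_pos hb]
      push_cast
      rw [invUnitSingle_mul, mul_smul_comm, mul_div_mul_left _ _ (Nat.cast_ne_zero.mpr hℓ0)]
    · rw [if_neg (hcop.not.mpr hb), if_neg hb]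
  rw [Nat.mul_div_cancel_left k (Nat.pos_of_ne_zero hℓ0), ← multiple, eq_sub_iff_add_eq,
    stickelbergerSum, stickelbergerSum,
    ← sum_filter_add_sum_filter_not {a ∈ Icc 1 (ℓ * k) | a.Coprime d} (ℓ ∣ ·), filter_filter,
    filter_filter, add_comm]
  congr 2
  exact filter_congr fun a _ => by rw [not_multiple, and_comm]

lemma stickelbergerSum_prod_primes {m : ℕ} (T : Finset ℕ) (hT : ∀ ℓ ∈ T, ℓ.Prime) {N : ℕ}
    (hN : N ≠ 0) (hmN : m ∣ N) (hTN : ∏ ℓ ∈ T, ℓ ∣ N) :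
    stickelbergerSum m N (∏ ℓ ∈ T, ℓ) =
      (∏ ℓ ∈ T, (1 - invUnitSingle ℚ (ℓ : ZMod m))) * stickelbergerSum m m 1 := by
  induction T using Finset.induction_on generalizing N with
  | empty => simpa using stickelbergerSum_one_of_dvd hN hmN
  | insert ℓ T hℓT ih =>
    rw [forall_mem_insert] at hT
    obtain ⟨hℓ, hT⟩ := hT
    simp only [prod_insert hℓT] at hTN ⊢
    have hℓ_not_dvd : ¬ ℓ ∣ ∏ p ∈ T, p := fun h => by
      obtain ⟨p, hp, hℓp⟩ := (Prime.dvd_finsetProd_iff hℓ.prime _).mp h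
      exact hℓT ((Nat.prime_dvd_prime_iff_eq hℓ (hT p hp)).mp hℓp ▸ hp)
    have hℓN : ℓ ∣ N := (dvd_mul_right ℓ _).trans hTN
    have quotient : invUnitSingle ℚ (ℓ : ZMod m) * stickelbergerSum m (N / ℓ) (∏ p ∈ T, p) =
        invUnitSingle ℚ (ℓ : ZMod m) *
          ((∏ p ∈ T, (1 - invUnitSingle ℚ (p : ZMod m))) * stickelbergerSum m m 1) := by
      by_cases hℓm : ℓ ∣ m
      · rw [invUnitSingle_natCast_eq_zero_of_prime_dvd hℓ hℓm, zero_mul, zero_mul]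
      · have hℓm_cop : ℓ.Coprime m := hℓ.coprime_iff_not_dvd.mpr hℓm
        rw [ih hT (Nat.div_ne_zero_iff_of_dvd hℓN |>.mpr ⟨hN, hℓ.ne_zero⟩)
          (Nat.dvd_div_of_mul_dvd (hℓm_cop.mul_dvd_of_dvd_of_dvd hℓN hmN))
          (Nat.dvd_div_of_mul_dvd hTN)]
    rw [stickelbergerSum_prime_mul hℓ hℓ_not_dvd hℓN, quotient,
      ih hT hN hmN ((dvd_mul_left _ ℓ).trans hTN)]
    ring

lemma coprime_prod_primeFactors_iff {a n : ℕ} (hn : n ≠ 0) :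
    a.Coprime (∏ p ∈ n.primeFactors, p) ↔ a.Coprime n := by
  refine ⟨fun h => Nat.coprime_of_dvd fun p hp hpa hpn => ?_,
    fun h => h.coprime_dvd_right (Nat.prod_primeFactors_dvd n)⟩
  exact hp.ne_one (Nat.eq_one_of_dvd_coprimes h hpa
    (dvd_prod_of_mem _ (Nat.mem_primeFactors.mpr ⟨hp, hpn, hn⟩)))

lemma one_sub_invUnitSingle_natCast_prime {m ℓ : ℕ} (hℓ : ℓ.Prime) :
    1 - invUnitSingle ℚ (ℓ : ZMod m) =
      if h : ℓ ∣ m then 1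
      else 1 - single (ZMod.unitOfCoprime ℓ (hℓ.coprime_iff_not_dvd.mpr h))⁻¹ (1 : ℚ) := by
  split_ifs with h
  · rw [invUnitSingle_natCast_eq_zero_of_prime_dvd hℓ h, sub_zero]
  · rw [invUnitSingle_natCast_of_coprime]

theorem statement0_general (f m : ℕ) (hf : 3 ≤ f) (hdvd : m ∣ f) :
    projMap f m hdvd (stickelberger f) =
      (∏ ℓ ∈ f.primeFactors.attach,
        if h : (ℓ : ℕ) ∣ m then 1
        else 1 - MonoidAlgebra.single
            ((ZMod.unitOfCoprime (ℓ : ℕ)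
              (((Nat.prime_of_mem_primeFactors ℓ.2).coprime_iff_not_dvd).mpr h))⁻¹) (1 : ℚ))
        * stickelberger m := by
  have hf0 : f ≠ 0 := by omega
  simp only [← fun ℓ : f.primeFactors => one_sub_invUnitSingle_natCast_prime (m := m)
    (Nat.prime_of_mem_primeFactors ℓ.2)]
  rw [prod_attach f.primeFactors fun ℓ => 1 - invUnitSingle ℚ (ℓ : ZMod m),
    projMap_stickelberger, stickelberger_eq_neg_stickelbergerSum, mul_neg,
    ← stickelbergerSum_prod_primes f.primeFactors (fun ℓ => Nat.prime_of_mem_primeFactors) hf0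
      hdvd (Nat.prod_primeFactors_dvd f)]
  simp only [stickelbergerSum, coprime_prod_primeFactors_iff hf0]

theorem statement0 (f m : ℕ) (hf : 3 ≤ f) (hm : 1 ≤ m) (hdvd : m ∣ f) :
    projMap f m hdvd (stickelberger f) =
      (∏ ℓ ∈ f.primeFactors.attach,
        if h : (ℓ : ℕ) ∣ m then 1
        else 1 - MonoidAlgebra.single
            ((ZMod.unitOfCoprime (ℓ : ℕ)
              (((Nat.prime_of_mem_primeFactors ℓ.2).coprime_iff_not_dvd).mpr h))⁻¹) (1 : ℚ))
        * stickelberger m :=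
  statement0_general f m hf hdvd
end

section
/- Let m ≥ 1 be an integer, ℓ a prime number not dividing m, and f := ℓ·m, with f ≥ 3. Then π_{f,m}(S_f) = (1 − [σ_ℓ]⁻¹) · S_m in ℚ[(ℤ/mℤ)ˣ]. -/
open scoped BigOperators

noncomputable def unitAux (m a : ℕ) : (ZMod m)ˣ :=
  if h : Nat.Coprime a m then ZMod.unitOfCoprime a h else 1

lemma unitAux_val {m a : ℕ} (h : Nat.Coprime a m) :
    ((unitAux m a : (ZMod m)ˣ) : ZMod m) = (a : ZMod m) := by
  simp [unitAux, dif_pos h]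

lemma unitAux_eq {m a b : ℕ} (ha : Nat.Coprime a m) (hb : Nat.Coprime b m)
    (h : (a : ZMod m) = (b : ZMod m)) : unitAux m a = unitAux m b := by
  ext; rw [unitAux_val ha, unitAux_val hb, h]

lemma unitAux_mul {m a b : ℕ} (ha : Nat.Coprime a m) (hb : Nat.Coprime b m) :
    unitAux m (a * b) = unitAux m a * unitAux m b := by
  ext
  rw [Units.val_mul, unitAux_val (Nat.Coprime.mul ha hb), unitAux_val ha, unitAux_val hb,
    Nat.cast_mul]

lemma stickelberger_eq (f : ℕ) :
    stickelberger f = -(∑ a ∈ (Finset.Icc 1 f).filter (fun a => Nat.Coprime a f),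
      ((a : ℚ) / f - 1 / 2) • MonoidAlgebra.single ((unitAux f a)⁻¹) (1 : ℚ)) := by
  rw [stickelberger, Finset.sum_filter]
  congr 1
  refine Finset.sum_congr rfl fun a _ => ?_
  by_cases h : Nat.Coprime a f
  · rw [dif_pos h, if_pos h]
    congr 2
    simp [unitAux, dif_pos h]
  · rw [dif_neg h, if_neg h]

lemma projMap_single (f m : ℕ) (h : m ∣ f) (u : (ZMod f)ˣ) (c : ℚ) :
    projMap f m h (c • MonoidAlgebra.single u 1) =
      c • MonoidAlgebra.single (ZMod.unitsMap h u) 1 := by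
  simp [projMap, MonoidAlgebra.mapDomainRingHom, Finsupp.mapDomain_smul,
    Finsupp.mapDomain_single]

lemma proj_stickelberger (ℓ m : ℕ) :
    projMap (ℓ * m) m (dvd_mul_left m ℓ) (stickelberger (ℓ * m)) =
      -(∑ a ∈ (Finset.Icc 1 (ℓ*m)).filter (fun a => Nat.Coprime a (ℓ*m)),
        ((a : ℚ) / ((ℓ*m : ℕ) : ℚ) - 1 / 2) •
          MonoidAlgebra.single ((unitAux m a)⁻¹) (1 : ℚ)) := by
  rw [stickelberger_eq, map_neg, map_sum]
  congr 1
  refine Finset.sum_congr rfl fun a ha => ?_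
  simp only [Finset.mem_filter] at ha
  rw [projMap_single, map_inv]
  congr 3
  ext
  rw [ZMod.unitsMap_def, Units.coe_map, unitAux_val ha.2, MonoidHom.coe_coe, map_natCast,
    unitAux_val (Nat.Coprime.coprime_dvd_right (dvd_mul_left m ℓ) ha.2)]

lemma coeff_sum (ℓ m b : ℕ) (hℓ : 0 < ℓ) (hm : 0 < m) :
    ∑ k ∈ Finset.range ℓ, (((b : ℚ) + k * m) / (ℓ * m) - 1 / 2)
      = (b : ℚ) / m - 1 / 2 := by
  have hS : (∑ k ∈ Finset.range ℓ, (k : ℚ)) * 2 = ℓ * (ℓ - 1) := by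
    have := Finset.sum_range_id_mul_two ℓ
    have := congrArg (Nat.cast : ℕ → ℚ) this
    push_cast [Nat.cast_sub hℓ] at this
    linarith [this]
  have hl0 : (ℓ : ℚ) ≠ 0 := Nat.cast_ne_zero.mpr hℓ.ne'
  have hm0 : (m : ℚ) ≠ 0 := Nat.cast_ne_zero.mpr hm.ne'
  rw [Finset.sum_sub_distrib, Finset.sum_const, Finset.card_range, ← Finset.sum_div,
    Finset.sum_add_distrib, Finset.sum_const, Finset.card_range, ← Finset.sum_mul]
  field_simp
  ring_nf
  nlinarith [hS]

open Finset in
lemma sumFull (ℓ m : ℕ) (hℓ : 0 < ℓ) (hm : 0 < m) :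
    ∑ a ∈ (Finset.Icc 1 (ℓ*m)).filter (fun a => Nat.Coprime a m),
        (((a:ℚ))/(ℓ*m) - 1/2) • MonoidAlgebra.single (unitAux m a)⁻¹ (1:ℚ)
      = ∑ b ∈ (Finset.Icc 1 m).filter (fun b => Nat.Coprime b m),
        (((b:ℚ))/m - 1/2) • MonoidAlgebra.single (unitAux m b)⁻¹ (1:ℚ) := by
  symm
  calc
    ∑ b ∈ (Finset.Icc 1 m).filter (fun b => Nat.Coprime b m),
        (((b:ℚ))/m - 1/2) • MonoidAlgebra.single (unitAux m b)⁻¹ (1:ℚ)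
      = ∑ b ∈ (Finset.Icc 1 m).filter (fun b => Nat.Coprime b m), ∑ k ∈ Finset.range ℓ,
          ((((b:ℚ)) + k * m)/(ℓ*m) - 1/2) • MonoidAlgebra.single (unitAux m b)⁻¹ (1:ℚ) := by
        refine Finset.sum_congr rfl fun b hb => ?_
        rw [← Finset.sum_smul, coeff_sum ℓ m b hℓ hm]
    _ = ∑ p ∈ ((Finset.Icc 1 m).filter (fun b => Nat.Coprime b m)) ×ˢ Finset.range ℓ,
          ((((p.1:ℚ)) + p.2 * m)/(ℓ*m) - 1/2) •
            MonoidAlgebra.single (unitAux m p.1)⁻¹ (1:ℚ) := by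
        rw [Finset.sum_product]
    _ = ∑ a ∈ (Finset.Icc 1 (ℓ*m)).filter (fun a => Nat.Coprime a m),
        (((a:ℚ))/(ℓ*m) - 1/2) • MonoidAlgebra.single (unitAux m a)⁻¹ (1:ℚ) := by
        refine Finset.sum_nbij' (fun p => p.1 + p.2 * m)
          (fun a => ((a-1) % m + 1, (a-1)/m)) ?_ ?_ ?_ ?_ ?_
        · rintro ⟨b, k⟩ hp
          simp only [Finset.mem_product, Finset.mem_filter, Finset.mem_Icc,
            Finset.mem_range] at hp ⊢
          obtain ⟨⟨⟨hb1, hbm⟩, hbc⟩, hk⟩ := hp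
          refine ⟨⟨by omega, ?_⟩, (Nat.coprime_add_mul_right_left b m k).mpr hbc⟩
          calc b + k * m ≤ m + k * m := by omega
            _ = (k+1) * m := by ring
            _ ≤ ℓ * m := Nat.mul_le_mul_right m hk
        · intro a ha
          simp only [Finset.mem_product, Finset.mem_filter, Finset.mem_Icc,
            Finset.mem_range] at ha ⊢
          obtain ⟨⟨ha1, ham⟩, hac⟩ := ha
          have hmod : (a-1) % m < m := Nat.mod_lt _ hm
          have hkey : (a-1) % m + 1 + (a-1)/m * m = a := by
            have := Nat.mod_add_div' (a-1) m
            omega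
          refine ⟨⟨⟨by omega, by omega⟩, ?_⟩, ?_⟩
          · have := Nat.coprime_add_mul_right_left ((a-1) % m + 1) m ((a-1)/m)
            rw [hkey] at this
            exact this.mp hac
          · rw [Nat.div_lt_iff_lt_mul hm]
            omega
        · rintro ⟨b, k⟩ hp
          simp only [Finset.mem_product, Finset.mem_filter, Finset.mem_Icc,
            Finset.mem_range] at hp
          obtain ⟨⟨⟨hb1, hbm⟩, hbc⟩, hk⟩ := hp
          have h1 : b + k * m - 1 = (b - 1) + k * m := by omega
          have h2 : ((b-1) + k * m) % m = b - 1 := by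
            rw [Nat.add_mul_mod_self_right, Nat.mod_eq_of_lt (by omega)]
          have h3 : ((b-1) + k * m) / m = k := by
            rw [Nat.add_mul_div_right _ _ hm, Nat.div_eq_of_lt (by omega)]; omega
          rw [Prod.ext_iff]
          constructor
          · simp only [h1, h2]; omega
          · simp only [h1, h3]
        · intro a ha
          simp only [Finset.mem_filter, Finset.mem_Icc] at ha
          show (a - 1) % m + 1 + (a - 1) / m * m = a
          have := Nat.mod_add_div' (a-1) m
          omega
        · rintro ⟨b, k⟩ hp
          simp only [Finset.mem_product, Finset.mem_filter, Finset.mem_Icc,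
            Finset.mem_range] at hp
          obtain ⟨⟨⟨hb1, hbm⟩, hbc⟩, hk⟩ := hp
          have hc : Nat.Coprime (b + k * m) m := (Nat.coprime_add_mul_right_left b m k).mpr hbc
          have hu : unitAux m b = unitAux m (b + k * m) := by
            refine unitAux_eq hbc hc ?_
            push_cast
            simp [ZMod.natCast_self]
          rw [hu]
          push_cast
          ring_nf

lemma sumDiv (ℓ m : ℕ) (hℓ : 0 < ℓ) (hm : 0 < m) (hc : Nat.Coprime ℓ m) :
    ∑ a ∈ (Finset.Icc 1 (ℓ*m)).filter (fun a => Nat.Coprime a m ∧ ℓ ∣ a),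
        (((a:ℚ))/(ℓ*m) - 1/2) • MonoidAlgebra.single (unitAux m a)⁻¹ (1:ℚ)
      = ∑ c ∈ (Finset.Icc 1 m).filter (fun c => Nat.Coprime c m),
        (((c:ℚ))/m - 1/2) • MonoidAlgebra.single (unitAux m ℓ * unitAux m c)⁻¹ (1:ℚ) := by
  refine Finset.sum_nbij' (fun a => a / ℓ) (fun c => ℓ * c) ?_ ?_ ?_ ?_ ?_
  · intro a ha
    simp only [Finset.mem_filter, Finset.mem_Icc] at ha ⊢
    obtain ⟨⟨ha1, ham⟩, hac, hd⟩ := ha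
    obtain ⟨c, rfl⟩ := hd
    rw [Nat.mul_div_cancel_left c hℓ]
    have hcc : Nat.Coprime c m := Nat.Coprime.coprime_dvd_left (Dvd.intro_left ℓ rfl) hac
    refine ⟨⟨?_, ?_⟩, hcc⟩
    · by_contra h
      push_neg at h
      interval_cases c <;> omega
    · exact Nat.le_of_mul_le_mul_left ham hℓ
  · intro c hcmem
    simp only [Finset.mem_filter, Finset.mem_Icc] at hcmem ⊢
    obtain ⟨⟨hc1, hcm⟩, hcc⟩ := hcmem
    exact ⟨⟨Nat.one_le_iff_ne_zero.mpr (by positivity), Nat.mul_le_mul_left ℓ hcm⟩,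
      Nat.Coprime.mul hc hcc, Dvd.intro c rfl⟩
  · intro a ha
    simp only [Finset.mem_filter, Finset.mem_Icc] at ha
    exact Nat.mul_div_cancel' ha.2.2
  · intro c _
    exact Nat.mul_div_cancel_left c hℓ
  · intro a ha
    simp only [Finset.mem_filter, Finset.mem_Icc] at ha
    obtain ⟨⟨ha1, ham⟩, hac, hd⟩ := ha
    obtain ⟨c, rfl⟩ := hd
    have hcc : Nat.Coprime c m := Nat.Coprime.coprime_dvd_left (Dvd.intro_left ℓ rfl) hac
    show _ = ((((ℓ * c / ℓ : ℕ) : ℚ))/m - 1/2) •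
      MonoidAlgebra.single (unitAux m ℓ * unitAux m (ℓ * c / ℓ))⁻¹ (1:ℚ)
    rw [Nat.mul_div_cancel_left c hℓ, ← unitAux_mul hc hcc]
    have hl0 : (ℓ : ℚ) ≠ 0 := Nat.cast_ne_zero.mpr hℓ.ne'
    have hm0 : (m : ℚ) ≠ 0 := Nat.cast_ne_zero.mpr hm.ne'
    congr 1
    push_cast
    field_simp

theorem statement1 (m : ℕ) (hm : 1 ≤ m) (ℓ : ℕ) (hℓ : ℓ.Prime) (hnd : ¬ ℓ ∣ m)
    (hf : 3 ≤ ℓ * m) :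
    projMap (ℓ * m) m (dvd_mul_left m ℓ) (stickelberger (ℓ * m)) =
      (1 - MonoidAlgebra.single
          ((ZMod.unitOfCoprime ℓ (hℓ.coprime_iff_not_dvd.mpr hnd))⁻¹) (1 : ℚ))
        * stickelberger m := by
  have hm0 : 0 < m := hm
  have hl0 : 0 < ℓ := hℓ.pos
  have hcop : Nat.Coprime ℓ m := hℓ.coprime_iff_not_dvd.mpr hnd
  have hσ : ZMod.unitOfCoprime ℓ (hℓ.coprime_iff_not_dvd.mpr hnd) = unitAux m ℓ := by
    rw [unitAux, dif_pos hcop]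
  rw [proj_stickelberger, stickelberger_eq m, hσ]
  -- split the LHS index set
  have hfil : (Finset.Icc 1 (ℓ*m)).filter (fun a => Nat.Coprime a (ℓ*m))
      = ((Finset.Icc 1 (ℓ*m)).filter (fun a => Nat.Coprime a m)).filter
          (fun a => ¬ ℓ ∣ a) := by
    rw [Finset.filter_filter]
    refine Finset.filter_congr fun a _ => ?_
    have hiff : Nat.Coprime a ℓ ↔ ¬ ℓ ∣ a := by
      rw [Nat.coprime_comm]; exact hℓ.coprime_iff_not_dvd
    rw [Nat.coprime_mul_iff_right]
    constructor
    · rintro ⟨h1, h2⟩; exact ⟨h2, hiff.mp h1⟩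
    · rintro ⟨h1, h2⟩; exact ⟨hiff.mpr h2, h1⟩
  have hsplit := Finset.sum_filter_add_sum_filter_not
      ((Finset.Icc 1 (ℓ*m)).filter (fun a => Nat.Coprime a m)) (fun a => ℓ ∣ a)
      (fun a => (((a:ℚ))/(ℓ*m) - 1/2) • MonoidAlgebra.single (unitAux m a)⁻¹ (1:ℚ))
  have hdivset : ((Finset.Icc 1 (ℓ*m)).filter (fun a => Nat.Coprime a m)).filter
        (fun a => ℓ ∣ a)
      = (Finset.Icc 1 (ℓ*m)).filter (fun a => Nat.Coprime a m ∧ ℓ ∣ a) := by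
    rw [Finset.filter_filter]
  rw [hfil]
  rw [hdivset] at hsplit
  have hA : ∑ a ∈ ((Finset.Icc 1 (ℓ*m)).filter (fun a => Nat.Coprime a m)).filter
        (fun a => ¬ ℓ ∣ a),
        (((a:ℚ))/(ℓ*m) - 1/2) • MonoidAlgebra.single (unitAux m a)⁻¹ (1:ℚ)
      = (∑ b ∈ (Finset.Icc 1 m).filter (fun b => Nat.Coprime b m),
          (((b:ℚ))/m - 1/2) • MonoidAlgebra.single (unitAux m b)⁻¹ (1:ℚ))
        - ∑ c ∈ (Finset.Icc 1 m).filter (fun c => Nat.Coprime c m),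
          (((c:ℚ))/m - 1/2) •
            MonoidAlgebra.single (unitAux m ℓ * unitAux m c)⁻¹ (1:ℚ) := by
    rw [← sumFull ℓ m hl0 hm0, ← sumDiv ℓ m hl0 hm0 hcop]
    exact eq_sub_of_add_eq' hsplit
  have hmul : MonoidAlgebra.single (unitAux m ℓ)⁻¹ (1:ℚ) *
      (∑ b ∈ (Finset.Icc 1 m).filter (fun b => Nat.Coprime b m),
        (((b:ℚ))/m - 1/2) • MonoidAlgebra.single (unitAux m b)⁻¹ (1:ℚ))
      = ∑ c ∈ (Finset.Icc 1 m).filter (fun c => Nat.Coprime c m),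
          (((c:ℚ))/m - 1/2) •
            MonoidAlgebra.single (unitAux m ℓ * unitAux m c)⁻¹ (1:ℚ) := by
    rw [Finset.mul_sum]
    refine Finset.sum_congr rfl fun c hc => ?_
    rw [mul_smul_comm, MonoidAlgebra.single_mul_single, one_mul, ← mul_inv]
  simp only [Nat.cast_mul]
  rw [hA, sub_mul, one_mul, mul_neg, hmul]
  abel
end

section
/- Let m ≥ 3 be an integer, ℓ a prime number dividing m, and f := ℓ·m. Then π_{f,m}(S_f) = S_m in ℚ[(ℤ/mℤ)ˣ]. -/
open scoped BigOperators

/-!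
Write `a ∈ [1, ℓm]` as `a = km + b` with `0 ≤ k < ℓ` and `1 ≤ b ≤ m`. As every prime factor
of `ℓ` divides `m`, `a` is prime to `ℓm` iff `b` is prime to `m`, and then `a` and `b` have the
same image in `(ℤ/mℤ)ˣ`. Hence the fibre over `b` contributes the coefficient
`Σ_{k<ℓ} ((b/m + k)/ℓ - 1/2) = b/m - 1/2`, the distribution relation of `B₁(x) = x - 1/2`.
-/

open Finset

theorem Finset.sum_Icc_one_mul {M : Type*} [AddCommMonoid M] (g : ℕ → M) (ℓ m : ℕ) :
    ∑ a ∈ Icc 1 (ℓ * m), g a = ∑ b ∈ Icc 1 m, ∑ k ∈ range ℓ, g (k * m + b) := by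
  simp only [show ∀ n, Icc 1 n = Ioc 0 n from Icc_add_one_left_eq_Ioc 0]
  induction ℓ with
  | zero => simp
  | succ ℓ ih =>
    have shift : ∑ a ∈ Ioc (ℓ * m) (ℓ * m + m), g a = ∑ b ∈ Ioc 0 m, g (ℓ * m + b) := by
      rw [← sum_image (g := (ℓ * m + ·)) (by simp [Set.InjOn]), image_add_left_Ioc, add_zero]
    rw [add_mul, one_mul, ← sum_Ioc_consecutive _ (Nat.zero_le _) (Nat.le_add_right _ _), ih,
      shift, ← sum_add_distrib]
    simp only [sum_range_succ, add_comm]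

theorem Finset.sum_range_add_div_sub_half {K : Type*} [Field K] [CharZero K] (x : K) {ℓ : ℕ}
    (hℓ : ℓ ≠ 0) : ∑ k ∈ range ℓ, ((x + k) / ℓ - 1 / 2) = x - 1 / 2 := by
  have gauss : (∑ k ∈ range ℓ, (k : K)) * 2 = ℓ * (ℓ - 1) := by
    rw [← Nat.cast_sum, ← Nat.cast_ofNat, ← Nat.cast_mul, sum_range_id_mul_two, Nat.cast_mul,
      Nat.cast_pred (Nat.pos_of_ne_zero hℓ)]
  rw [sum_sub_distrib, ← sum_div, sum_add_distrib]
  simp only [sum_const, card_range, nsmul_eq_mul]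
  field_simp
  linear_combination gauss

theorem Nat.coprime_mul_add_mul_iff {ℓ m : ℕ} (hdvd : ℓ ∣ m) (k b : ℕ) :
    Nat.Coprime (k * m + b) (ℓ * m) ↔ Nat.Coprime b m := by
  rw [Nat.coprime_mul_iff_right, Nat.coprime_mul_right_add_left]
  refine ⟨And.right, fun h => ⟨?_, h⟩⟩
  exact ((Nat.coprime_mul_right_add_left _ _ _).2 h).coprime_dvd_right hdvd

theorem ZMod.unitsMap_unitOfCoprime {m n : ℕ} (hdvd : m ∣ n) {a : ℕ} (ha : a.Coprime n) :
    ZMod.unitsMap hdvd (ZMod.unitOfCoprime a ha)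
      = ZMod.unitOfCoprime a (Nat.Coprime.coprime_dvd_right hdvd ha) := by
  ext
  simp [ZMod.unitsMap_def]

theorem ZMod.unitOfCoprime_mul_add {m : ℕ} (k b : ℕ) (h : (k * m + b).Coprime m)
    (hb : b.Coprime m) : ZMod.unitOfCoprime (k * m + b) h = ZMod.unitOfCoprime b hb := by
  ext
  simp

noncomputable def unitInvSingle (n a : ℕ) : MonoidAlgebra ℚ (ZMod n)ˣ :=
  if h : a.Coprime n then MonoidAlgebra.single (ZMod.unitOfCoprime a h)⁻¹ 1 else 0

theorem stickelberger_eq_neg_sum (n : ℕ) :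
    stickelberger n = -∑ a ∈ Icc 1 n, ((a : ℚ) / n - 1 / 2) • unitInvSingle n a := by
  simp only [unitInvSingle, smul_dite, smul_zero]
  rfl

theorem projMap_unitInvSingle {ℓ m : ℕ} (hdvd : ℓ ∣ m) (k b : ℕ) :
    projMap (ℓ * m) m (dvd_mul_left m ℓ) (unitInvSingle (ℓ * m) (k * m + b)) =
      unitInvSingle m b := by
  by_cases hb : b.Coprime m
  · have hkb := (Nat.coprime_mul_add_mul_iff hdvd k b).2 hb
    rw [unitInvSingle, unitInvSingle, dif_pos hkb, dif_pos hb, projMap,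
      MonoidAlgebra.mapDomainRingHom_apply, MonoidAlgebra.mapDomain_single, map_inv,
      ZMod.unitsMap_unitOfCoprime, ZMod.unitOfCoprime_mul_add]
  · rw [unitInvSingle, unitInvSingle, dif_neg (mt (Nat.coprime_mul_add_mul_iff hdvd k b).1 hb),
      dif_neg hb, map_zero]

theorem statement2_general (m : ℕ) (ℓ : ℕ) (hdvd : ℓ ∣ m) :
    projMap (ℓ * m) m (dvd_mul_left m ℓ) (stickelberger (ℓ * m)) = stickelberger m := by
  rw [stickelberger_eq_neg_sum, stickelberger_eq_neg_sum, map_neg, map_sum, sum_Icc_one_mul]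
  congr 1
  refine sum_congr rfl fun b hb => ?_
  have hm : m ≠ 0 := by have := mem_Icc.1 hb; omega
  have hℓ : ℓ ≠ 0 := ne_zero_of_dvd_ne_zero hm hdvd
  simp only [map_rat_smul, projMap_unitInvSingle hdvd, ← sum_smul]
  congr 1
  rw [← sum_range_add_div_sub_half ((b : ℚ) / m) hℓ]
  refine sum_congr rfl fun k _ => ?_
  push_cast
  field_simp
  ring

theorem statement2 (m : ℕ) (hm : 3 ≤ m) (ℓ : ℕ) (hℓ : ℓ.Prime) (hdvd : ℓ ∣ m) :
    projMap (ℓ * m) m (dvd_mul_left m ℓ) (stickelberger (ℓ * m)) = stickelberger m :=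
  statement2_general m ℓ hdvd
end

section
/- Let m ≥ 3 be an integer, ℓ a prime number not dividing m, and f := ℓ·m. Let ζ be a primitive f-th root of unity in a field of characteristic zero, and set ζ_m := ζ^ℓ, a primitive m-th root of unity. Let u be a positive integer with u·ℓ ≡ 1 (mod m). Then N_{ℚ(ζ)/ℚ(ζ_m)}(1 − ζ) · (1 − ζ_m^u) = 1 − ζ_m, where N_{ℚ(ζ)/ℚ(ζ_m)} denotes the field norm from the f-th cyclotomic field ℚ(ζ) to its subfield ℚ(ζ_m). -/
/-!
Over `F = ℚ(ζ_m)` the element `ζ` is a root of `X ^ ℓ - ζ_m`, which also has the root `ζ_m ^ u ∈ F`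
because `u ℓ ≡ 1 (mod m)`. Comparing `φ(ℓ m) = φ(ℓ) φ(m)` with `[ℚ(ζ_m) : ℚ] = φ(m)` gives
`[F(ζ) : F] = ℓ - 1`, so `X ^ ℓ - ζ_m = minpoly_F(ζ) · (X - ζ_m ^ u)`. Evaluating at `1` and using
`N(1 - ζ) = minpoly_F(ζ)(1)` yields the identity.
-/

open IntermediateField Polynomial

theorem PowerBasis.norm_algebraMap_sub_gen {R S : Type*} [CommRing R] [CommRing S] [Algebra R S]
    (pb : PowerBasis R S) (r : R) :
    Algebra.norm R (algebraMap R S r - pb.gen) = (minpoly R pb.gen).eval r := by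
  rw [Algebra.norm_eq_matrix_det pb.basis, map_sub, AlgHom.commutes, ← charpoly_leftMulMatrix,
    Matrix.eval_charpoly, Matrix.algebraMap_eq_diagonal]
  rfl

theorem Polynomial.eq_mul_X_sub_C_of_dvd {K : Type*} [Field K] {p q : K[X]} {c : K}
    (hp : p.Monic) (hq : q.Monic) (hpq : p ∣ q) (hdeg : p.natDegree + 1 = q.natDegree)
    (hqc : q.IsRoot c) (hpc : ¬ p.IsRoot c) : q = p * (X - C c) := by
  obtain ⟨r, rfl⟩ := hpq
  have hr : r.Monic := hp.of_mul_monic_left hq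
  have hrc : r.IsRoot c := by
    rw [IsRoot, eval_mul] at hqc
    exact (mul_eq_zero.mp hqc).resolve_left hpc
  have hdegr : r.natDegree = 1 := by
    rw [hp.natDegree_mul hr] at hdeg
    omega
  rw [eq_of_monic_of_dvd_of_natDegree_le (monic_X_sub_C c) hr (dvd_iff_isRoot.mpr hrc)
    (by rw [hdegr, natDegree_X_sub_C])]

theorem minpoly.eq_algebraMap_of_isRoot {K L : Type*} [Field K] [Field L] [Algebra K L] {x : L}
    {c : K} (hx : IsIntegral K x) (hc : (minpoly K x).IsRoot c) : x = algebraMap K L c := by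
  have hmin : X - C c = minpoly K x :=
    eq_of_monic_of_associated (monic_X_sub_C c) (minpoly.monic hx)
      ((irreducible_X_sub_C c).associated_of_dvd (minpoly.irreducible hx) (dvd_iff_isRoot.mpr hc))
  have := minpoly.aeval K x
  rwa [← hmin, map_sub, aeval_X, aeval_C, sub_eq_zero] at this

theorem IsPrimitiveRoot.finrank_rat_adjoin {K : Type*} [Field K] [CharZero K] {ζ : K} {n : ℕ}
    (hζ : IsPrimitiveRoot ζ n) (hn : 0 < n) : Module.finrank ℚ ℚ⟮ζ⟯ = n.totient := by
  rw [adjoin.finrank (hζ.isIntegral hn).tower_top, ← cyclotomic_eq_minpoly_rat hζ hn,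
    natDegree_cyclotomic]

theorem IsPrimitiveRoot.natDegree_minpoly_adjoin_pow {K : Type*} [Field K] [CharZero K] {ζ : K}
    {a b : ℕ} (hζ : IsPrimitiveRoot ζ (a * b)) (hab : a.Coprime b) (hpos : 0 < a * b) :
    (minpoly ℚ⟮ζ ^ a⟯ ζ).natDegree = a.totient := by
  have hb : 0 < b := Nat.pos_of_mul_pos_left hpos
  set F := ℚ⟮ζ ^ a⟯
  have hle : F ≤ ℚ⟮ζ⟯ := adjoin_simple_le_iff.mpr (pow_mem (mem_adjoin_simple_self ℚ ζ) a)
  have htower : restrictScalars ℚ F⟮ζ⟯ = ℚ⟮ζ⟯ :=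
    (restrictScalars_adjoin_eq_sup ℚ F {ζ}).trans (sup_of_le_right hle)
  have key : Module.finrank ℚ F * Module.finrank F F⟮ζ⟯ = Module.finrank ℚ ℚ⟮ζ⟯ := by
    rw [← htower]
    exact Module.finrank_mul_finrank ℚ F F⟮ζ⟯
  rw [(hζ.pow hpos rfl).finrank_rat_adjoin hb, hζ.finrank_rat_adjoin hpos, Nat.totient_mul hab,
    mul_comm, adjoin.finrank (hζ.isIntegral hpos).tower_top] at key
  exact Nat.eq_of_mul_eq_mul_right (Nat.totient_pos.mpr hb) key

theorem IsPrimitiveRoot.X_pow_sub_C_eq_minpoly_mul {K : Type*} [Field K] [CharZero K]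
    {ℓ m u : ℕ} {ζ : K} (hζ : IsPrimitiveRoot ζ (ℓ * m)) (hℓ : ℓ.Prime) (hnd : ¬ ℓ ∣ m)
    (huℓ : u * ℓ ≡ 1 [MOD m]) :
    X ^ ℓ - C (AdjoinSimple.gen ℚ (ζ ^ ℓ)) =
      minpoly ℚ⟮ζ ^ ℓ⟯ ζ * (X - C (AdjoinSimple.gen ℚ (ζ ^ ℓ) ^ u)) := by
  have hpos : 0 < ℓ * m := Nat.mul_pos hℓ.pos (Nat.pos_of_ne_zero (by rintro rfl; simp at hnd))
  have hint : IsIntegral ℚ⟮ζ ^ ℓ⟯ ζ := (hζ.isIntegral hpos).tower_top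
  set g := AdjoinSimple.gen ℚ (ζ ^ ℓ)
  have hg : algebraMap ℚ⟮ζ ^ ℓ⟯ K g = ζ ^ ℓ := AdjoinSimple.algebraMap_gen ℚ (ζ ^ ℓ)
  have hgm : g ^ m = 1 := (algebraMap ℚ⟮ζ ^ ℓ⟯ K).injective <| by
    rw [map_pow, hg, map_one, ← pow_mul, hζ.pow_eq_one]
  have hζ_ne : ζ ≠ ζ ^ (ℓ * u) := by
    rw [← pow_one ζ, ← pow_mul, one_mul, ne_eq, (hζ.isOfFinOrder hpos.ne').pow_eq_pow_iff_modEq,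
      ← hζ.eq_orderOf]
    intro h
    have hmod : 1 ≡ ℓ * u [MOD ℓ] := Nat.ModEq.of_mul_right m h
    simp [Nat.ModEq, Nat.mod_eq_of_lt hℓ.one_lt] at hmod
  refine eq_mul_X_sub_C_of_dvd (minpoly.monic hint) (monic_X_pow_sub_C g hℓ.ne_zero) ?_ ?_ ?_ ?_
  · exact minpoly.dvd _ ζ (by rw [map_sub, map_pow, aeval_X, aeval_C, hg, sub_self])
  · rw [natDegree_X_pow_sub_C, hζ.natDegree_minpoly_adjoin_pow
      ((Nat.Prime.coprime_iff_not_dvd hℓ).mpr hnd) hpos, Nat.totient_prime hℓ]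
    have := hℓ.one_lt
    omega
  · rw [IsRoot, eval_sub, eval_pow, eval_X, eval_C, ← pow_mul, pow_eq_pow_of_modEq huℓ hgm,
      pow_one, sub_self]
  · intro hroot
    have := minpoly.eq_algebraMap_of_isRoot hint hroot
    rw [map_pow, hg, ← pow_mul] at this
    exact hζ_ne this

theorem statement3_general {K : Type*} [Field K] [CharZero K] (m ℓ : ℕ)
    (hℓ : ℓ.Prime) (hnd : ¬ ℓ ∣ m) (ζ : K) (hζ : IsPrimitiveRoot ζ (ℓ * m))
    (u : ℕ) (huℓ : u * ℓ ≡ 1 [MOD m]) :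
    Algebra.norm ℚ⟮ζ ^ ℓ⟯
        (1 - IntermediateField.AdjoinSimple.gen ℚ⟮ζ ^ ℓ⟯ ζ)
      * (1 - IntermediateField.AdjoinSimple.gen ℚ (ζ ^ ℓ) ^ u)
      = 1 - IntermediateField.AdjoinSimple.gen ℚ (ζ ^ ℓ) := by
  have hpos : 0 < ℓ * m := Nat.mul_pos hℓ.pos (Nat.pos_of_ne_zero (by rintro rfl; simp at hnd))
  have hint : IsIntegral ℚ⟮ζ ^ ℓ⟯ ζ := (hζ.isIntegral hpos).tower_top
  have hnorm : Algebra.norm ℚ⟮ζ ^ ℓ⟯ (1 - AdjoinSimple.gen ℚ⟮ζ ^ ℓ⟯ ζ) =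
      (minpoly ℚ⟮ζ ^ ℓ⟯ ζ).eval 1 := by
    simpa [adjoin.powerBasis_gen, minpoly_gen] using
      (adjoin.powerBasis hint).norm_algebraMap_sub_gen 1
  simpa [hnorm] using (congrArg (eval 1) (hζ.X_pow_sub_C_eq_minpoly_mul hℓ hnd huℓ)).symm

theorem statement3 {K : Type*} [Field K] [CharZero K] (m ℓ : ℕ) (hm : 3 ≤ m)
    (hℓ : ℓ.Prime) (hnd : ¬ ℓ ∣ m) (ζ : K) (hζ : IsPrimitiveRoot ζ (ℓ * m))
    (u : ℕ) (hu : 0 < u) (huℓ : u * ℓ ≡ 1 [MOD m]) :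
    Algebra.norm ℚ⟮ζ ^ ℓ⟯
        (1 - IntermediateField.AdjoinSimple.gen ℚ⟮ζ ^ ℓ⟯ ζ)
      * (1 - IntermediateField.AdjoinSimple.gen ℚ (ζ ^ ℓ) ^ u)
      = 1 - IntermediateField.AdjoinSimple.gen ℚ (ζ ^ ℓ) :=
  statement3_general m ℓ hℓ hnd ζ hζ u huℓ
end

section
/- Let f ≥ 3 be an integer and c an odd integer coprime to f. Then for every integer a with 1 ≤ a ≤ f and gcd(a,f) = 1 one has λ_{f−a}(c) = c − 1 − λ_a(c), i.e. λ_{f−a}(c) + (1−c)/2 = −(λ_a(c) + (1−c)/2). Consequently, in ℚ[(ℤ/fℤ)ˣ], Σ_{1≤a≤f, gcd(a,f)=1} (λ_a(c) + (1−c)/2)·[ā]⁻¹ = (Σ_{1≤a<f/2, gcd(a,f)=1} (λ_a(c) + (1−c)/2)·[ā]⁻¹) · (1 − [σ_{−1}]), where σ_{−1} is the class of −1 in (ℤ/fℤ)ˣ. -/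
open scoped BigOperators

theorem statement5 (f : ℕ) (hf : 3 ≤ f) (c : ℕ) (hcodd : Odd c) (hc : Nat.Coprime c f)
    -- `a' a` is the unique integer in `[1,f]` with `a' a · c ≡ a (mod f)`
    (a' : ℕ → ℕ)
    (ha' : ∀ a, 1 ≤ a → a ≤ f → Nat.Coprime a f →
      1 ≤ a' a ∧ a' a ≤ f ∧ a' a * c ≡ a [MOD f])
    -- `lam a = λ_a(c) := (a' a · c − a)/f ∈ ℤ`
    (lam : ℕ → ℤ)
    (hlam : ∀ a, 1 ≤ a → a ≤ f → Nat.Coprime a f →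
      lam a * f = (a' a : ℤ) * c - a) :
    (∀ a, 1 ≤ a → a ≤ f → Nat.Coprime a f →
      lam (f - a) = (c : ℤ) - 1 - lam a) ∧
    (∑ a ∈ Finset.Icc 1 f,
        if h : Nat.Coprime a f then
          ((lam a : ℚ) + (1 - (c : ℚ)) / 2) •
            MonoidAlgebra.single ((ZMod.unitOfCoprime a h)⁻¹) (1 : ℚ)
        else 0)
      = (∑ a ∈ Finset.Icc 1 f,
          if h : 2 * a < f ∧ Nat.Coprime a f then
            ((lam a : ℚ) + (1 - (c : ℚ)) / 2) •
              MonoidAlgebra.single ((ZMod.unitOfCoprime a h.2)⁻¹) (1 : ℚ)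
          else 0)
        * (1 - MonoidAlgebra.single (-1 : (ZMod f)ˣ) (1 : ℚ)) := by
  have hf0 : f ≠ 0 := by omega
  -- coprime elements of [1,f] are < f
  have hlt : ∀ a : ℕ, a ≤ f → Nat.Coprime a f → a < f := by
    intro a h2 hcop
    by_contra h
    have haf : a = f := by omega
    subst haf
    have := (Nat.coprime_self a).mp hcop
    omega
  -- uniqueness in [1,f] for a given residue
  have huniq : ∀ x y : ℕ, 1 ≤ x → x ≤ f → 1 ≤ y → y ≤ f → x ≡ y [MOD f] → x = y := by
    intro x y hx1 hx2 hy1 hy2 h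
    rcases le_total x y with hle | hle
    · have h0 := Nat.eq_zero_of_dvd_of_lt ((Nat.modEq_iff_dvd' hle).mp h) (by omega)
      omega
    · have hd := (Nat.modEq_iff_dvd' hle).mp h.symm
      have h0 := Nat.eq_zero_of_dvd_of_lt hd (by omega)
      omega
  -- coprimality of f - a
  have hcosub : ∀ a : ℕ, a ≤ f → Nat.Coprime a f → Nat.Coprime (f - a) f := by
    intro a h2 hcop
    exact (Nat.coprime_self_sub_left h2).mpr hcop
  -- Part 1
  have key : ∀ a, 1 ≤ a → a ≤ f → Nat.Coprime a f →
      lam (f - a) = (c : ℤ) - 1 - lam a := by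
    intro a h1 h2 hcop
    have haf : a < f := hlt a h2 hcop
    obtain ⟨hb1, hb2, hb3⟩ := ha' a h1 h2 hcop
    have hfa1 : 1 ≤ f - a := by omega
    have hfa2 : f - a ≤ f := by omega
    have hcop' : Nat.Coprime (f - a) f := hcosub a h2 hcop
    obtain ⟨hd1, hd2, hd3⟩ := ha' (f - a) hfa1 hfa2 hcop'
    -- a' a < f
    have hbf : a' a < f := by
      rcases lt_or_eq_of_le hb2 with h | h
      · exact h
      · exfalso
        rw [h] at hb3
        have h2' : (f * c) % f = 0 := Nat.mul_mod_right f c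
        have h3' : a % f = a := Nat.mod_eq_of_lt haf
        have hb3' : (f * c) % f = a % f := hb3
        omega
    -- show a' (f - a) = f - a' a via ZMod
    have hcu : IsUnit ((c : ZMod f)) := (ZMod.unitOfCoprime c hc).isUnit
    have e1 : ((a' (f - a) : ℕ) : ZMod f) * c = ((f - a' a : ℕ) : ZMod f) * c := by
      have z1 : ((a' (f - a) * c : ℕ) : ZMod f) = ((f - a : ℕ) : ZMod f) :=
        (ZMod.natCast_eq_natCast_iff _ _ _).mpr hd3
      have z2 : ((a' a * c : ℕ) : ZMod f) = ((a : ℕ) : ZMod f) :=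
        (ZMod.natCast_eq_natCast_iff _ _ _).mpr hb3
      push_cast [Nat.cast_sub haf.le, Nat.cast_sub hbf.le] at z1 z2 ⊢
      rw [ZMod.natCast_self] at *
      rw [sub_mul]
      push_cast at *
      rw [z2]
      rw [z1]
      ring
    have e2 : a' (f - a) = f - a' a := by
      have : ((a' (f - a) : ℕ) : ZMod f) = ((f - a' a : ℕ) : ZMod f) :=
        hcu.mul_left_cancel (by rw [mul_comm ((c:ZMod f)), mul_comm ((c:ZMod f))]; exact e1)
      exact huniq _ _ hd1 hd2 (by omega) (by omega)
        ((ZMod.natCast_eq_natCast_iff _ _ _).mp this)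
    -- conclude
    have hL := hlam (f - a) hfa1 hfa2 hcop'
    have hA := hlam a h1 h2 hcop
    rw [e2] at hL
    have hcast : ((f - a' a : ℕ) : ℤ) = (f : ℤ) - (a' a : ℤ) := by
      push_cast [Nat.cast_sub hbf.le]; ring
    have hcast2 : ((f - a : ℕ) : ℤ) = (f : ℤ) - (a : ℤ) := by
      push_cast [Nat.cast_sub haf.le]; ring
    rw [hcast, hcast2] at hL
    have hfZ : (f : ℤ) ≠ 0 := by exact_mod_cast hf0
    have : lam (f - a) * f = ((c : ℤ) - 1 - lam a) * f := by
      rw [hL]; nlinarith [hA]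
    exact mul_right_cancel₀ hfZ this
  refine ⟨key, ?_⟩
  -- Part 2
  set μ : ℕ → ℚ := fun a => (lam a : ℚ) + (1 - (c : ℚ)) / 2 with hμ
  set U : ℕ → (ZMod f)ˣ := fun a =>
    if h : Nat.Coprime a f then (ZMod.unitOfCoprime a h)⁻¹ else 1 with hU
  have hUeq : ∀ a (h : Nat.Coprime a f), U a = (ZMod.unitOfCoprime a h)⁻¹ := by
    intro a h; simp [hU, dif_pos h]
  -- rewrite LHS
  have hLrw : (∑ a ∈ Finset.Icc 1 f,
      if h : Nat.Coprime a f then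
        μ a • MonoidAlgebra.single ((ZMod.unitOfCoprime a h)⁻¹) (1 : ℚ)
      else 0)
      = ∑ a ∈ (Finset.Icc 1 f).filter (fun a => Nat.Coprime a f),
          μ a • MonoidAlgebra.single (U a) (1 : ℚ) := by
    rw [Finset.sum_filter]
    refine Finset.sum_congr rfl ?_
    intro a _
    by_cases h : Nat.Coprime a f
    · rw [dif_pos h, if_pos h, hUeq a h]
    · rw [dif_neg h, if_neg h]
  have hRrw : (∑ a ∈ Finset.Icc 1 f,
      if h : 2 * a < f ∧ Nat.Coprime a f then
        μ a • MonoidAlgebra.single ((ZMod.unitOfCoprime a h.2)⁻¹) (1 : ℚ)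
      else 0)
      = ∑ a ∈ (Finset.Icc 1 f).filter (fun a => 2 * a < f ∧ Nat.Coprime a f),
          μ a • MonoidAlgebra.single (U a) (1 : ℚ) := by
    rw [Finset.sum_filter]
    refine Finset.sum_congr rfl ?_
    intro a _
    by_cases h : 2 * a < f ∧ Nat.Coprime a f
    · rw [dif_pos h, if_pos h, hUeq a h.2]
    · rw [dif_neg h, if_neg h]
  rw [hLrw, hRrw]
  -- split the full filter
  have hsplit : (Finset.Icc 1 f).filter (fun a => Nat.Coprime a f)
      = ((Finset.Icc 1 f).filter (fun a => 2 * a < f ∧ Nat.Coprime a f)) ∪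
        ((Finset.Icc 1 f).filter (fun a => f < 2 * a ∧ Nat.Coprime a f)) := by
    rw [← Finset.filter_or]
    refine Finset.filter_congr ?_
    intro a ha
    simp only [Finset.mem_Icc] at ha
    constructor
    · intro h
      rcases lt_trichotomy (2 * a) f with h' | h' | h'
      · exact Or.inl ⟨h', h⟩
      · exfalso
        have hd : a ∣ f := ⟨2, by omega⟩
        have := Nat.Coprime.eq_one_of_dvd h hd
        omega
      · exact Or.inr ⟨h', h⟩
    · rintro (⟨_, h⟩ | ⟨_, h⟩) <;> exact h
  have hdisj : Disjoint ((Finset.Icc 1 f).filter (fun a => 2 * a < f ∧ Nat.Coprime a f))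
      ((Finset.Icc 1 f).filter (fun a => f < 2 * a ∧ Nat.Coprime a f)) := by
    rw [Finset.disjoint_left]
    intro a h1 h2
    simp only [Finset.mem_filter] at h1 h2
    omega
  rw [hsplit, Finset.sum_union hdisj, mul_sub, mul_one, Finset.sum_mul]
  have hmain : (∑ a ∈ (Finset.Icc 1 f).filter (fun a => f < 2 * a ∧ Nat.Coprime a f),
        μ a • MonoidAlgebra.single (U a) (1 : ℚ))
      = ∑ a ∈ (Finset.Icc 1 f).filter (fun a => 2 * a < f ∧ Nat.Coprime a f),
          -((μ a • MonoidAlgebra.single (U a) (1 : ℚ)) *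
            MonoidAlgebra.single (-1 : (ZMod f)ˣ) (1 : ℚ)) := by
    refine Finset.sum_nbij' (fun a => f - a) (fun a => f - a) ?_ ?_ ?_ ?_ ?_
    · intro a ha
      simp only [Finset.mem_filter, Finset.mem_Icc] at ha ⊢
      have hco := hcosub a ha.1.2 ha.2.2
      have := hlt a ha.1.2 ha.2.2
      exact ⟨⟨by omega, by omega⟩, by omega, hco⟩
    · intro a ha
      simp only [Finset.mem_filter, Finset.mem_Icc] at ha ⊢
      have hco := hcosub a ha.1.2 ha.2.2
      have := hlt a ha.1.2 ha.2.2
      exact ⟨⟨by omega, by omega⟩, by omega, hco⟩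
    · intro a ha
      simp only [Finset.mem_filter, Finset.mem_Icc] at ha
      show f - (f - a) = a
      omega
    · intro a ha
      simp only [Finset.mem_filter, Finset.mem_Icc] at ha
      show f - (f - a) = a
      omega
    · intro a ha
      simp only [Finset.mem_filter, Finset.mem_Icc] at ha
      obtain ⟨⟨h1, h2⟩, hgt, hcop⟩ := ha
      have haf : a < f := hlt a h2 hcop
      have hcop' : Nat.Coprime (f - a) f := hcosub a h2 hcop
      have hμeq : μ a = - μ (f - a) := by
        have hk := key (f - a) (by omega) (by omega) hcop'
        have hsub : f - (f - a) = a := by omega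
        rw [hsub] at hk
        simp only [hμ]
        rw [hk]
        push_cast
        ring
      have hUeq2 : U a = U (f - a) * (-1) := by
        rw [hUeq a hcop, hUeq (f - a) hcop']
        have : (ZMod.unitOfCoprime (f - a) hcop') = - ZMod.unitOfCoprime a hcop := by
          ext
          simp only [ZMod.coe_unitOfCoprime, Units.val_neg]
          push_cast [Nat.cast_sub haf.le]
          rw [ZMod.natCast_self]
          ring
        rw [this, inv_neg]
        simp [mul_comm]
      rw [hμeq, hUeq2]
      rw [smul_mul_assoc, MonoidAlgebra.single_mul_single, mul_one]
      simp
  rw [hmain, Finset.sum_neg_distrib]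
  ring
end

section
/- Let f ≥ 3 be an integer and c an odd integer coprime to f. Then in ℚ[(ℤ/fℤ)ˣ] one has (1 − c·[σ_c]⁻¹) · S_f = Σ_{1≤a≤f, gcd(a,f)=1} (λ_a(c) + (1−c)/2)·[ā]⁻¹; in particular the element (1 − c·[σ_c]⁻¹)·S_f has all its coefficients in ℤ. -/
open scoped BigOperators

/-!
Multiplication by `[σ_c]⁻¹` sends `[b̄]⁻¹` to `[b̄ c̄]⁻¹`; reindexing by `b = a'_c`, which permutes
the reduced residues in `[1, f]`, shows that the coefficient of `[ā]⁻¹` in `[σ_c]⁻¹ · S_f` is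
`−(a'_c/f − 1/2)`. Hence the coefficient of `[ā]⁻¹` in `(1 − c[σ_c]⁻¹) · S_f` is
`(a'_c c − a)/f + (1 − c)/2 = λ_a(c) + (1 − c)/2`, an integer because `c` is odd.
-/

open Finset MonoidAlgebra

lemma Nat.eq_of_modEq_of_mem_Icc {n a b : ℕ} (ha : a ∈ Icc 1 n) (hb : b ∈ Icc 1 n)
    (h : a ≡ b [MOD n]) : a = b := by
  rw [mem_Icc] at ha hb
  wlog hab : a ≤ b generalizing a b
  · exact (this hb ha h.symm (le_of_not_ge hab)).symm
  have hdvd := (Nat.modEq_iff_dvd' hab).1 h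
  have := Nat.eq_zero_of_dvd_of_lt hdvd (by omega)
  omega

lemma Nat.Coprime.of_mul_modEq {n x c a : ℕ} (ha : a.Coprime n) (h : x * c ≡ a [MOD n]) :
    x.Coprime n :=
  Nat.Coprime.coprime_mul_right (h.gcd_eq.trans ha)

lemma MonoidAlgebra.exists_coeff_sum_intCast_smul_single {k G ι : Type*} [Ring k]
    (s : Finset ι) (r : ι → ℤ) (u : ι → G) (g : G) :
    ∃ z : ℤ, (∑ i ∈ s, (r i : k) • single (u i) (1 : k)).coeff g = z := by
  classical
  refine ⟨∑ i ∈ s, if u i = g then r i else 0, ?_⟩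
  simp [coeff_sum, coeff_single, Finsupp.single_apply, apply_ite]

def reducedResidues (f : ℕ) : Finset ℕ := (Icc 1 f).filter (·.Coprime f)

lemma mem_reducedResidues {f a : ℕ} :
    a ∈ reducedResidues f ↔ a ∈ Icc 1 f ∧ a.Coprime f :=
  mem_filter

noncomputable def toUnit (f a : ℕ) : (ZMod f)ˣ :=
  if h : a.Coprime f then ZMod.unitOfCoprime a h else 1

lemma toUnit_of_coprime {f a : ℕ} (h : a.Coprime f) : toUnit f a = ZMod.unitOfCoprime a h :=
  dif_pos h

lemma coe_toUnit {f a : ℕ} (h : a.Coprime f) : (toUnit f a : ZMod f) = a := by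
  rw [toUnit_of_coprime h, ZMod.coe_unitOfCoprime]

noncomputable def invResidueSum (f : ℕ) (q : ℕ → ℚ) : MonoidAlgebra ℚ (ZMod f)ˣ :=
  ∑ a ∈ reducedResidues f, q a • single (toUnit f a)⁻¹ 1

section invResidueSum

variable {f : ℕ}

lemma sum_dite_eq_invResidueSum (q : ℕ → ℚ) :
    (∑ a ∈ Icc 1 f, if h : a.Coprime f then
        q a • single (ZMod.unitOfCoprime a h)⁻¹ (1 : ℚ) else 0) = invResidueSum f q := by
  rw [invResidueSum, reducedResidues, sum_filter]
  refine sum_congr rfl fun a _ => ?_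
  split_ifs with h
  · rw [toUnit_of_coprime h]
  · rfl

lemma stickelberger_eq_neg_invResidueSum :
    stickelberger f = -invResidueSum f (fun a => (a : ℚ) / f - 1 / 2) := by
  rw [stickelberger, sum_dite_eq_invResidueSum]

lemma invResidueSum_congr {q r : ℕ → ℚ} (h : ∀ a ∈ reducedResidues f, q a = r a) :
    invResidueSum f q = invResidueSum f r :=
  sum_congr rfl fun a ha => by rw [h a ha]

lemma invResidueSum_sub (q r : ℕ → ℚ) :
    invResidueSum f (q - r) = invResidueSum f q - invResidueSum f r := by
  simp only [invResidueSum, Pi.sub_apply, sub_smul, sum_sub_distrib]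

lemma invResidueSum_smul (x : ℚ) (q : ℕ → ℚ) :
    invResidueSum f (x • q) = x • invResidueSum f q := by
  simp only [invResidueSum, Pi.smul_apply, smul_sum, smul_smul, smul_eq_mul]

lemma exists_coeff_invResidueSum_intCast (r : ℕ → ℤ) (g : (ZMod f)ˣ) :
    ∃ z : ℤ, (invResidueSum f (fun a => (r a : ℚ))).coeff g = z :=
  exists_coeff_sum_intCast_smul_single _ r _ g

end invResidueSum

def IsResidueDiv (f c : ℕ) (a' : ℕ → ℕ) : Prop :=
  ∀ a ∈ reducedResidues f, a' a ∈ Icc 1 f ∧ a' a * c ≡ a [MOD f]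

namespace IsResidueDiv

variable {f c : ℕ} {a' : ℕ → ℕ}

lemma mapsTo (h : IsResidueDiv f c a') :
    Set.MapsTo a' (reducedResidues f) (reducedResidues f) := fun a ha =>
  mem_reducedResidues.2
    ⟨(h a ha).1, (mem_reducedResidues.1 ha).2.of_mul_modEq (h a ha).2⟩

lemma injOn (h : IsResidueDiv f c a') : Set.InjOn a' (reducedResidues f) := fun a ha b hb hab =>
  Nat.eq_of_modEq_of_mem_Icc (mem_reducedResidues.1 ha).1 (mem_reducedResidues.1 hb).1 <|
    (h a ha).2.symm.trans (hab ▸ (h b hb).2)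

lemma sum_comp {M : Type*} [AddCommMonoid M] (h : IsResidueDiv f c a') (F : ℕ → M) :
    ∑ a ∈ reducedResidues f, F (a' a) = ∑ b ∈ reducedResidues f, F b :=
  sum_nbij a' h.mapsTo h.injOn (surjOn_of_injOn_of_card_le _ h.mapsTo h.injOn le_rfl)
    fun _ _ => rfl

lemma toUnit_mul (h : IsResidueDiv f c a') (hc : c.Coprime f) {a : ℕ}
    (ha : a ∈ reducedResidues f) : toUnit f (a' a) * toUnit f c = toUnit f a := by
  ext
  rw [Units.val_mul, coe_toUnit (mem_reducedResidues.1 (h.mapsTo ha)).2, coe_toUnit hc,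
    coe_toUnit (mem_reducedResidues.1 ha).2, ← Nat.cast_mul, ZMod.natCast_eq_natCast_iff]
  exact (h a ha).2

lemma single_mul_invResidueSum (h : IsResidueDiv f c a') (hc : c.Coprime f) (q : ℕ → ℚ) :
    single (ZMod.unitOfCoprime c hc)⁻¹ 1 * invResidueSum f q = invResidueSum f (q ∘ a') := by
  rw [invResidueSum, invResidueSum, mul_sum, ← h.sum_comp]
  refine sum_congr rfl fun a ha => ?_
  rw [mul_smul_comm, single_mul_single, one_mul, ← mul_inv_rev, ← toUnit_of_coprime hc,
    h.toUnit_mul hc ha, Function.comp_apply]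

end IsResidueDiv

theorem statement6_general (f : ℕ) (c : ℕ) (hcodd : Odd c) (hc : Nat.Coprime c f)
    -- `a' a` is the unique integer in `[1,f]` with `a' a · c ≡ a (mod f)`
    (a' : ℕ → ℕ)
    (ha' : ∀ a, 1 ≤ a → a ≤ f → Nat.Coprime a f →
      1 ≤ a' a ∧ a' a ≤ f ∧ a' a * c ≡ a [MOD f])
    -- `lam a = λ_a(c) := (a' a · c − a)/f ∈ ℤ`
    (lam : ℕ → ℤ)
    (hlam : ∀ a, 1 ≤ a → a ≤ f → Nat.Coprime a f →
      lam a * f = (a' a : ℤ) * c - a) :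
    (1 - (c : ℚ) • MonoidAlgebra.single ((ZMod.unitOfCoprime c hc)⁻¹) (1 : ℚ))
        * stickelberger f
      = (∑ a ∈ Finset.Icc 1 f,
          if h : Nat.Coprime a f then
            ((lam a : ℚ) + (1 - (c : ℚ)) / 2) •
              MonoidAlgebra.single ((ZMod.unitOfCoprime a h)⁻¹) (1 : ℚ)
          else 0) ∧
    ∀ g : (ZMod f)ˣ, ∃ z : ℤ,
      ((1 - (c : ℚ) • MonoidAlgebra.single ((ZMod.unitOfCoprime c hc)⁻¹) (1 : ℚ))
        * stickelberger f).coeff g = (z : ℚ) := by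
  have hdiv : IsResidueDiv f c a' := fun a ha => by
    obtain ⟨h, hcop⟩ := mem_reducedResidues.1 ha
    obtain ⟨h1, h2, hmod⟩ := ha' a (mem_Icc.1 h).1 (mem_Icc.1 h).2 hcop
    exact ⟨mem_Icc.2 ⟨h1, h2⟩, hmod⟩
  have hprod : (1 - (c : ℚ) • single (ZMod.unitOfCoprime c hc)⁻¹ 1) * stickelberger f =
      invResidueSum f (fun a => lam a + (1 - c) / 2) := by
    rw [stickelberger_eq_neg_invResidueSum, sub_mul, one_mul, smul_mul_assoc, mul_neg,
      hdiv.single_mul_invResidueSum hc, smul_neg, sub_neg_eq_add, neg_add_eq_sub,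
      ← invResidueSum_smul, ← invResidueSum_sub]
    refine invResidueSum_congr fun a ha => ?_
    obtain ⟨h, hcop⟩ := mem_reducedResidues.1 ha
    obtain ⟨h1, h2⟩ := mem_Icc.1 h
    have hf : (f : ℚ) ≠ 0 := Nat.cast_ne_zero.2 (by omega)
    have hlamq : (lam a : ℚ) * f = a' a * c - a := by exact_mod_cast hlam a h1 h2 hcop
    simp only [Pi.sub_apply, Pi.smul_apply, Function.comp_apply, smul_eq_mul]
    field_simp
    linear_combination -2 * hlamq
  refine ⟨hprod.trans (sum_dite_eq_invResidueSum _).symm, fun g => ?_⟩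
  obtain ⟨k, rfl⟩ := hcodd
  rw [hprod,
    invResidueSum_congr (r := fun a => ((lam a - k : ℤ) : ℚ)) fun a _ => by push_cast; ring]
  exact exists_coeff_invResidueSum_intCast _ g

theorem statement6 (f : ℕ) (hf : 3 ≤ f) (c : ℕ) (hcodd : Odd c) (hc : Nat.Coprime c f)
    -- `a' a` is the unique integer in `[1,f]` with `a' a · c ≡ a (mod f)`
    (a' : ℕ → ℕ)
    (ha' : ∀ a, 1 ≤ a → a ≤ f → Nat.Coprime a f →
      1 ≤ a' a ∧ a' a ≤ f ∧ a' a * c ≡ a [MOD f])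
    -- `lam a = λ_a(c) := (a' a · c − a)/f ∈ ℤ`
    (lam : ℕ → ℤ)
    (hlam : ∀ a, 1 ≤ a → a ≤ f → Nat.Coprime a f →
      lam a * f = (a' a : ℤ) * c - a) :
    (1 - (c : ℚ) • MonoidAlgebra.single ((ZMod.unitOfCoprime c hc)⁻¹) (1 : ℚ))
        * stickelberger f
      = (∑ a ∈ Finset.Icc 1 f,
          if h : Nat.Coprime a f then
            ((lam a : ℚ) + (1 - (c : ℚ)) / 2) •
              MonoidAlgebra.single ((ZMod.unitOfCoprime a h)⁻¹) (1 : ℚ)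
          else 0) ∧
    ∀ g : (ZMod f)ˣ, ∃ z : ℤ,
      ((1 - (c : ℚ) • MonoidAlgebra.single ((ZMod.unitOfCoprime c hc)⁻¹) (1 : ℚ))
        * stickelberger f).coeff g = (z : ℚ) :=
  statement6_general f c hcodd hc a' ha' lam hlam
end

section
/- Let m ≥ 3 be an integer and ℓ a prime number not dividing m. For each integer a with 1 ≤ a ≤ m and gcd(a,m) = 1, let b_a be the unique integer in [1,m] with b_a·ℓ ≡ a (mod m), and set λ*_a := (b_a·ℓ − a)/m ∈ ℤ. Then in ℚ[(ℤ/mℤ)ˣ] one has Σ_{1≤a≤m, gcd(a,m)=1} λ*_a·[ā]⁻¹ = (ℓ·[σ_ℓ]⁻¹ − 1) · Σ_{1≤a≤m, gcd(a,m)=1} (a/m)·[ā]⁻¹. -/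
open scoped BigOperators

theorem statement8 (m : ℕ) (hm : 3 ≤ m) (ℓ : ℕ) (hℓ : ℓ.Prime) (hnd : ¬ ℓ ∣ m)
    -- `b a` is the unique integer in `[1,m]` with `b a · ℓ ≡ a (mod m)`
    (b : ℕ → ℕ)
    (hb : ∀ a, 1 ≤ a → a ≤ m → Nat.Coprime a m →
      1 ≤ b a ∧ b a ≤ m ∧ b a * ℓ ≡ a [MOD m])
    -- `lam a = λ*_a := (b a · ℓ − a)/m ∈ ℤ`
    (lam : ℕ → ℤ)
    (hlam : ∀ a, 1 ≤ a → a ≤ m → Nat.Coprime a m →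
      lam a * m = (b a : ℤ) * ℓ - a) :
    (∑ a ∈ Finset.Icc 1 m,
        if h : Nat.Coprime a m then
          (lam a : ℚ) • MonoidAlgebra.single ((ZMod.unitOfCoprime a h)⁻¹) (1 : ℚ)
        else 0)
      = ((ℓ : ℚ) • MonoidAlgebra.single
            ((ZMod.unitOfCoprime ℓ (hℓ.coprime_iff_not_dvd.mpr hnd))⁻¹) (1 : ℚ) - 1)
        * (∑ a ∈ Finset.Icc 1 m,
            if h : Nat.Coprime a m then
              ((a : ℚ) / m) • MonoidAlgebra.single ((ZMod.unitOfCoprime a h)⁻¹) (1 : ℚ)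
            else 0) := by
  classical
  haveI : NeZero m := ⟨by omega⟩
  have hmQ : (m : ℚ) ≠ 0 := by
    exact_mod_cast (by omega : m ≠ 0)
  have hℓm : Nat.Coprime ℓ m := hℓ.coprime_iff_not_dvd.mpr hnd
  set v : (ZMod m)ˣ := (ZMod.unitOfCoprime ℓ hℓm)⁻¹ with hv
  set S : Finset ℕ := (Finset.Icc 1 m).filter (fun a => Nat.Coprime a m) with hSdef
  have hmem : ∀ a ∈ S, 1 ≤ a ∧ a ≤ m ∧ Nat.Coprime a m := by
    intro a ha
    simp only [hSdef, Finset.mem_filter, Finset.mem_Icc] at ha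
    tauto
  have hmem' : ∀ a, 1 ≤ a → a ≤ m → Nat.Coprime a m → a ∈ S := by
    intro a h1 h2 h3
    simp only [hSdef, Finset.mem_filter, Finset.mem_Icc]
    exact ⟨⟨h1, h2⟩, h3⟩
  have hlt : ∀ a ∈ S, a < m := by
    intro a ha
    obtain ⟨h1, h2, h3⟩ := hmem a ha
    rcases lt_or_eq_of_le h2 with h | h
    · exact h
    · exfalso; subst h
      have := Nat.gcd_self a
      unfold Nat.Coprime at h3
      omega
  have hsub : S ⊆ Finset.Icc 1 m := Finset.filter_subset _ _
  -- b maps S into S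
  have hbS : ∀ a ∈ S, b a ∈ S := by
    intro a ha
    obtain ⟨h1, h2, h3⟩ := hmem a ha
    obtain ⟨hb1, hb2, hb3⟩ := hb a h1 h2 h3
    refine hmem' _ hb1 hb2 ?_
    have hcast : ((b a * ℓ : ℕ) : ZMod m) = (a : ZMod m) :=
      (ZMod.natCast_eq_natCast_iff _ _ _).mpr hb3
    have hunit : IsUnit ((b a * ℓ : ℕ) : ZMod m) := by
      rw [hcast]; exact (ZMod.isUnit_iff_coprime a m).mpr h3
    rw [Nat.cast_mul] at hunit
    exact (ZMod.isUnit_iff_coprime (b a) m).mp (isUnit_of_mul_isUnit_left hunit)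
  -- the inverse map
  set g : ℕ → ℕ := fun c => (c * ℓ) % m with hgdef
  have hgS : ∀ c ∈ S, g c ∈ S := by
    intro c hc
    obtain ⟨h1, h2, h3⟩ := hmem c hc
    have hcop : Nat.Coprime (c * ℓ) m := Nat.Coprime.mul h3 hℓm
    have hmod : Nat.Coprime ((c * ℓ) % m) m := by
      have : ((c * ℓ % m : ℕ) : ZMod m) = ((c * ℓ : ℕ) : ZMod m) := by
        rw [ZMod.natCast_eq_natCast_iff]
        exact (Nat.mod_mod_of_dvd _ dvd_rfl ▸ Nat.mod_modEq (c * ℓ) m)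
      have hu : IsUnit ((c * ℓ % m : ℕ) : ZMod m) := by
        rw [this]; exact (ZMod.isUnit_iff_coprime _ m).mpr hcop
      exact (ZMod.isUnit_iff_coprime _ m).mp hu
    refine hmem' _ ?_ ?_ hmod
    · rcases Nat.eq_zero_or_pos ((c * ℓ) % m) with h | h
      · exfalso
        have : Nat.gcd ((c*ℓ) % m) m = m := by rw [h]; exact Nat.gcd_zero_left m
        unfold Nat.Coprime at hmod; omega
      · exact h
    · exact le_of_lt (Nat.mod_lt _ (by omega))
  have hgb : ∀ a ∈ S, g (b a) = a := by
    intro a ha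
    obtain ⟨h1, h2, h3⟩ := hmem a ha
    obtain ⟨hb1, hb2, hb3⟩ := hb a h1 h2 h3
    have : (b a * ℓ) % m = a % m := hb3
    rw [hgdef]
    simp only []
    rw [this, Nat.mod_eq_of_lt (hlt a ha)]
  have hbg : ∀ c ∈ S, b (g c) = c := by
    intro c hc
    have hgc := hgS c hc
    obtain ⟨h1, h2, h3⟩ := hmem (g c) hgc
    obtain ⟨hb1, hb2, hb3⟩ := hb (g c) h1 h2 h3
    -- b (g c) * ℓ ≡ g c ≡ c * ℓ [MOD m]
    have e1 : (g c : ℕ) ≡ c * ℓ [MOD m] := (Nat.mod_modEq (c * ℓ) m)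
    have e2 : b (g c) * ℓ ≡ c * ℓ [MOD m] := hb3.trans e1
    have e3 : b (g c) ≡ c [MOD m] := e2.cancel_right_of_coprime (Nat.coprime_comm.mp hℓm)
    have hblt : b (g c) < m := hlt _ (hbS _ hgc)
    have hclt : c < m := hlt _ hc
    have := e3
    unfold Nat.ModEq at this
    rw [Nat.mod_eq_of_lt hblt, Nat.mod_eq_of_lt hclt] at this
    exact this
  -- restrict both sums to S
  have e1 : (∑ a ∈ Finset.Icc 1 m,
        if h : Nat.Coprime a m then
          (lam a : ℚ) • MonoidAlgebra.single ((ZMod.unitOfCoprime a h)⁻¹) (1 : ℚ)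
        else 0)
      = ∑ a ∈ S,
        if h : Nat.Coprime a m then
          (lam a : ℚ) • MonoidAlgebra.single ((ZMod.unitOfCoprime a h)⁻¹) (1 : ℚ)
        else 0 := by
    refine (Finset.sum_subset hsub ?_).symm
    intro a ha hna
    rw [dif_neg]
    intro hcop
    exact hna (hmem' a (Finset.mem_Icc.mp ha).1 (Finset.mem_Icc.mp ha).2 hcop)
  have e2 : (∑ a ∈ Finset.Icc 1 m,
        if h : Nat.Coprime a m then
          ((a : ℚ) / m) • MonoidAlgebra.single ((ZMod.unitOfCoprime a h)⁻¹) (1 : ℚ)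
        else 0)
      = ∑ a ∈ S,
        if h : Nat.Coprime a m then
          ((a : ℚ) / m) • MonoidAlgebra.single ((ZMod.unitOfCoprime a h)⁻¹) (1 : ℚ)
        else 0 := by
    refine (Finset.sum_subset hsub ?_).symm
    intro a ha hna
    rw [dif_neg]
    intro hcop
    exact hna (hmem' a (Finset.mem_Icc.mp ha).1 (Finset.mem_Icc.mp ha).2 hcop)
  rw [e1, e2, sub_mul, one_mul, Finset.mul_sum]
  -- reindex the first RHS sum via b
  have reidx :
      (∑ a ∈ S, ((ℓ : ℚ) • MonoidAlgebra.single v (1 : ℚ)) *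
        (if h : Nat.Coprime a m then
          ((a : ℚ) / m) • MonoidAlgebra.single ((ZMod.unitOfCoprime a h)⁻¹) (1 : ℚ)
        else 0))
      = ∑ a ∈ S, ((ℓ : ℚ) • MonoidAlgebra.single v (1 : ℚ)) *
        (if h : Nat.Coprime (b a) m then
          ((b a : ℚ) / m) • MonoidAlgebra.single ((ZMod.unitOfCoprime (b a) h)⁻¹) (1 : ℚ)
        else 0) := by
    refine Finset.sum_nbij' g b hgS hbS hbg hgb ?_
    intro c hc
    congr 1
    rw [hbg c hc]
  rw [reidx, ← Finset.sum_sub_distrib]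
  refine Finset.sum_congr rfl ?_
  intro a ha
  obtain ⟨h1, h2, h3⟩ := hmem a ha
  obtain ⟨hbb1, hbb2, hbb3⟩ := hbS a ha |> hmem _
  obtain ⟨hb1, hb2, hb3⟩ := hb a h1 h2 h3
  rw [dif_pos h3, dif_pos hbb3, dif_pos h3]
  -- compute the product of singles
  have key : ((ℓ : ℚ) • MonoidAlgebra.single v (1 : ℚ)) *
      (((b a : ℚ) / m) • MonoidAlgebra.single ((ZMod.unitOfCoprime (b a) hbb3)⁻¹) (1 : ℚ))
      = ((ℓ : ℚ) * ((b a : ℚ) / m)) •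
        MonoidAlgebra.single ((ZMod.unitOfCoprime a h3)⁻¹) (1 : ℚ) := by
    rw [smul_mul_assoc, mul_smul_comm, MonoidAlgebra.single_mul_single, mul_one, smul_smul]
    congr 2
    rw [hv, ← mul_inv]
    congr 1
    ext
    push_cast [ZMod.coe_unitOfCoprime]
    have : ((b a * ℓ : ℕ) : ZMod m) = (a : ZMod m) :=
      (ZMod.natCast_eq_natCast_iff _ _ _).mpr hb3
    push_cast at this
    rw [mul_comm]
    exact this
  rw [key, ← sub_smul]
  congr 1
  have hlam' := hlam a h1 h2 h3
  have : (lam a : ℚ) * m = (b a : ℚ) * ℓ - a := by exact_mod_cast congrArg (Int.cast : ℤ → ℚ) hlam'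
  field_simp
  linarith [this]
end

section
/- Let p be a prime, q := p if p is odd and q := 4 if p = 2, let n ≥ 0, and let φ := φ(q·pⁿ) (Euler's totient), so φ = (p−1)pⁿ for p odd and φ = 2^{n+1} for p = 2. Let f be a positive multiple of q·pⁿ, let a and c be integers coprime to f with 1 ≤ a ≤ f and c odd, let a′ be the unique integer in [1,f] with a′·c ≡ a (mod f), and set λ := (a′·c − a)/f ∈ ℤ. Then the p-adic valuation of the integer (a′·c)^φ − a^φ is at least v_p(f·φ); the quotient ((a′·c)^φ − a^φ)/(f·φ) therefore lies in ℤ_p, and it satisfies ((a′·c)^φ − a^φ)/(f·φ) ≡ λ·a^{−1} (mod p^{n+1}·ℤ_p), where a^{−1} denotes the inverse of a in ℤ_p. -/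
/-!
Write `a'c = a + x` with `x = λf`. By the binomial theorem
`a((a + x)^φ - a^φ) = φ x a^φ + a ∑_{k ≥ 2} C(φ,k) x^k a^(φ-k)`.
Since `v_p(C(φ,k)) ≥ v_p(φ) - v_p(k)` and `v_p(x) ≥ v_p(f) ≥ n + 1` (`≥ n + 2` when `p = 2`),
every term with `k ≥ 2` is divisible by `p^(v_p(fφ) + n + 1)`, and `a^φ ≡ 1 mod p^(n+1)` by
Euler's theorem. Hence `a((a'c)^φ - a^φ) ≡ λ fφ mod p^(v_p(fφ) + n + 1)`: dividing by `fφ` in `ℚ_p`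
shows that the quotient is within `p^-(n+1)` of `λ/a`, so it is a `p`-adic integer congruent to
`λ a⁻¹`.
-/

section Binomial

variable {p : ℕ} [hp : Fact p.Prime]

theorem padicValNat_le_sub_two_of_ne_two (hp2 : p ≠ 2) {k : ℕ} (hk : 2 ≤ k) :
    padicValNat p k ≤ k - 2 := by
  have hp3 : 3 ≤ p := by have := hp.out.two_le; omega
  have hbern : 1 + padicValNat p k * 2 ≤ (1 + 2) ^ padicValNat p k :=
    one_add_le_pow_of_two_add_nonneg (by norm_num) _
  have hpow : (1 + 2) ^ padicValNat p k ≤ k :=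
    (Nat.pow_le_pow_left hp3 _).trans (Nat.le_of_dvd (by omega) pow_padicValNat_dvd)
  omega

theorem padicValNat_add_le_mul {k e r : ℕ} (hk : 2 ≤ k) (he : 0 < e) (hr : r ≤ e)
    (hr2 : p = 2 → r < e) : padicValNat p k + r ≤ (k - 1) * e := by
  obtain ⟨j, rfl⟩ : ∃ j, k = j + 2 := ⟨k - 2, by omega⟩
  have hje : j ≤ j * e := Nat.le_mul_of_pos_right j he
  rw [show j + 2 - 1 = j + 1 by omega, add_one_mul]
  by_cases hp2 : p = 2
  · have := Nat.padicValNat_lt_self (p := p) (n := j + 2) (by omega)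
    have := hr2 hp2
    omega
  · have := padicValNat_le_sub_two_of_ne_two hp2 hk
    omega

theorem padicValNat_le_choose_add {N k : ℕ} (hk : k ≠ 0) (hkN : k ≤ N) :
    padicValNat p N ≤ padicValNat p (N.choose k) + padicValNat p k := by
  obtain ⟨M, rfl⟩ : ∃ M, N = M + 1 := ⟨N - 1, by omega⟩
  obtain ⟨j, rfl⟩ : ∃ j, k = j + 1 := ⟨k - 1, by omega⟩
  have hid := congrArg (padicValNat p) (Nat.add_one_mul_choose_eq M j)
  rw [padicValNat.mul (by omega) (Nat.choose_pos (by omega)).ne',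
    padicValNat.mul (Nat.choose_pos hkN).ne' (by omega)] at hid
  omega

theorem pow_dvd_choose_mul_pow {x : ℤ} {e r N k : ℕ} (hx : (p : ℤ) ^ e ∣ x) (he : 0 < e)
    (hr : r ≤ e) (hr2 : p = 2 → r < e) (hk : 2 ≤ k) (hkN : k ≤ N) :
    (p : ℤ) ^ (e + padicValNat p N + r) ∣ (N.choose k : ℤ) * x ^ k := by
  have hchoose : (p : ℤ) ^ padicValNat p (N.choose k) ∣ (N.choose k : ℤ) := by
    exact_mod_cast pow_padicValNat_dvd
  have hle : e + padicValNat p N + r ≤ padicValNat p (N.choose k) + k * e := by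
    have := padicValNat_le_choose_add (p := p) (by omega : k ≠ 0) hkN
    have := padicValNat_add_le_mul hk he hr hr2
    have : (k - 1) * e + e = k * e := by rw [← add_one_mul, Nat.sub_add_cancel (by omega)]
    omega
  refine (pow_dvd_pow _ hle).trans ?_
  rw [pow_add, pow_mul']
  exact mul_dvd_mul hchoose (pow_dvd_pow_of_dvd hx k)

theorem pow_dvd_add_pow_sub_pow_sub {x : ℤ} {e r : ℕ} (hx : (p : ℤ) ^ e ∣ x) (he : 0 < e)
    (hr : r ≤ e) (hr2 : p = 2 → r < e) (A : ℤ) (N : ℕ) :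
    (p : ℤ) ^ (e + padicValNat p N + r) ∣ (x + A) ^ N - A ^ N - N * x * A ^ (N - 1) := by
  rcases N with _ | M
  · simp
  have hterm : ∀ i ∈ Finset.range M, (p : ℤ) ^ (e + padicValNat p (M + 1) + r) ∣
      x ^ (i + 1 + 1) * A ^ (M + 1 - (i + 1 + 1)) * ((M + 1).choose (i + 1 + 1) : ℤ) :=
    fun i hi ↦ by
      rw [mul_right_comm, mul_comm (x ^ _)]
      exact (pow_dvd_choose_mul_pow hx he hr hr2 (by omega)
        (by have := Finset.mem_range.1 hi; omega)).mul_right _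
  have hexpand : (x + A) ^ (M + 1) - A ^ (M + 1) - ((M + 1 : ℕ) : ℤ) * x * A ^ (M + 1 - 1) =
      ∑ i ∈ Finset.range M,
        x ^ (i + 1 + 1) * A ^ (M + 1 - (i + 1 + 1)) * ((M + 1).choose (i + 1 + 1) : ℤ) := by
    rw [add_pow, Finset.sum_range_succ', Finset.sum_range_succ']
    simp only [Nat.reduceSubDiff, zero_add, pow_one, add_tsub_cancel_right, Nat.choose_one_right,
      Nat.cast_add, Nat.cast_one, pow_zero, tsub_zero, one_mul, Nat.choose_zero_right, mul_one]
    ring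
  rw [hexpand]
  exact Finset.dvd_sum hterm

theorem pow_dvd_mul_add_pow_sub_pow_sub_mul {x : ℤ} {e r : ℕ} (hx : (p : ℤ) ^ e ∣ x) (he : 0 < e)
    (hr : r ≤ e) (hr2 : p = 2 → r < e) {A : ℤ} {N : ℕ} (hN : N ≠ 0)
    (hA : (p : ℤ) ^ r ∣ A ^ N - 1) :
    (p : ℤ) ^ (e + padicValNat p N + r) ∣ A * ((x + A) ^ N - A ^ N) - x * N := by
  have hN' : (p : ℤ) ^ padicValNat p N ∣ (N : ℤ) := by exact_mod_cast pow_padicValNat_dvd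
  have hsplit : A * ((x + A) ^ N - A ^ N) - x * N =
      A * ((x + A) ^ N - A ^ N - N * x * A ^ (N - 1)) + x * N * (A ^ N - 1) := by
    obtain ⟨M, rfl⟩ : ∃ M, N = M + 1 := ⟨N - 1, by omega⟩
    rw [Nat.add_sub_cancel]
    ring
  rw [hsplit]
  exact dvd_add ((pow_dvd_add_pow_sub_pow_sub hx he hr hr2 A N).mul_left A)
    (by rw [pow_add, pow_add]; exact mul_dvd_mul (mul_dvd_mul hx hN') hA)

end Binomial

theorem pow_padicValNat_dvd_of_pow_dvd_mul_sub {p N : ℕ} {a : ℕ} (ha : p.Coprime a) {D lam : ℤ}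
    {s : ℕ} (h : (p : ℤ) ^ (padicValNat p N + s) ∣ a * D - lam * N) :
    (p : ℤ) ^ padicValNat p N ∣ D := by
  have hN : (p : ℤ) ^ padicValNat p N ∣ lam * N :=
    Dvd.dvd.mul_left (by exact_mod_cast pow_padicValNat_dvd) lam
  have haD : (p : ℤ) ^ padicValNat p N ∣ a * D := by
    simpa using dvd_add ((pow_dvd_pow _ (Nat.le_add_right _ s)).trans h) hN
  exact ((Nat.isCoprime_iff_coprime.2 ha).pow_left).dvd_of_dvd_mul_left haD

theorem exists_padicInt_eq_div_of_pow_dvd_mul_sub {p : ℕ} [hp : Fact p.Prime] {N : ℕ} (hN : N ≠ 0) {a : ℕ} (ha : p.Coprime a)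
    {D lam : ℤ} {s : ℕ} (h : (p : ℤ) ^ (padicValNat p N + s) ∣ a * D - lam * N) :
    ∃ z : ℤ_[p], (z : ℚ_[p]) = D / N ∧ ∃ t : ℤ_[p],
      z - (lam : ℤ_[p]) * PadicInt.inv (a : ℤ_[p]) = (p : ℤ_[p]) ^ s * t := by
  have hp0 : (0 : ℝ) < p := by exact_mod_cast hp.out.pos
  have hNnorm : ‖(N : ℚ_[p])‖ = p ^ (-(padicValNat p N : ℤ)) := by
    rw [Padic.norm_eq_zpow_neg_valuation (by exact_mod_cast hN), Padic.valuation_natCast]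
  have hanorm : ‖(a : ℚ_[p])‖ = 1 := Padic.norm_natCast_eq_one_iff.2 ha
  have ha0 : (a : ℚ_[p]) ≠ 0 := norm_ne_zero_iff.1 (by rw [hanorm]; exact one_ne_zero)
  have hN0 : (N : ℚ_[p]) ≠ 0 := by exact_mod_cast hN
  have hclose : ‖(D / N : ℚ_[p]) - lam / a‖ ≤ p ^ (-(s : ℤ)) := by
    have hnum := (Padic.norm_int_le_pow_iff_dvd _ _).2 h
    have : (D / N : ℚ_[p]) - lam / a = ((a * D - lam * N : ℤ) : ℚ_[p]) / (a * N) := by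
      rw [div_sub_div _ _ hN0 ha0]
      push_cast
      ring
    rw [this, norm_div, norm_mul, hanorm, hNnorm, one_mul, div_le_iff₀ (zpow_pos hp0 _),
      ← zpow_add₀ hp0.ne']
    rwa [show -(s : ℤ) + -(padicValNat p N : ℤ) = -((padicValNat p N + s : ℕ) : ℤ) by
      push_cast; ring]
  have hint : ‖(D / N : ℚ_[p])‖ ≤ 1 := by
    have hlam : ‖(lam / a : ℚ_[p])‖ ≤ 1 := by
      rw [norm_div, hanorm, div_one]; exact Padic.norm_int_le_one lam
    calc ‖(D / N : ℚ_[p])‖ = ‖(D / N - lam / a : ℚ_[p]) + lam / a‖ := by rw [sub_add_cancel]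
      _ ≤ max _ _ := Padic.nonarchimedean _ _
      _ ≤ 1 := max_le (hclose.trans (zpow_le_one_of_nonpos₀
        (by exact_mod_cast hp.out.one_le) (by omega))) hlam
  set z : ℤ_[p] := ⟨_, hint⟩
  have hinv : ((PadicInt.inv (a : ℤ_[p]) : ℤ_[p]) : ℚ_[p]) = (a : ℚ_[p])⁻¹ :=
    eq_inv_of_mul_eq_one_left <| by
      exact_mod_cast congrArg ((↑) : ℤ_[p] → ℚ_[p])
        (PadicInt.inv_mul (PadicInt.norm_natCast_eq_one_iff.2 ha))
  have hmem : z - (lam : ℤ_[p]) * PadicInt.inv (a : ℤ_[p]) ∈ Ideal.span {(p : ℤ_[p]) ^ s} := by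
    refine (PadicInt.norm_le_pow_iff_mem_span_pow _ s).1 ?_
    rw [PadicInt.norm_def]
    push_cast
    rw [hinv, ← div_eq_mul_inv]
    exact hclose
  obtain ⟨t, ht⟩ := Ideal.mem_span_singleton'.1 hmem
  exact ⟨z, rfl, t, by rw [← ht, mul_comm]⟩

theorem statement9_general (p : ℕ) [Fact p.Prime] (n : ℕ)
    (q : ℕ) (hq : q = if p = 2 then 4 else p)
    (φ : ℕ) (hφ : φ = (q * p ^ n).totient)
    (f : ℕ) (hf : 0 < f) (hmul : q * p ^ n ∣ f)
    (a c : ℕ) (ha : Nat.Coprime a f)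
    -- `a'` is the unique integer in `[1,f]` with `a'·c ≡ a (mod f)`
    (a' : ℕ)
    -- `lam = λ := (a'·c − a)/f ∈ ℤ`
    (lam : ℤ) (hlam : lam * f = (a' : ℤ) * c - a) :
    -- the p-adic valuation of `(a'·c)^φ − a^φ` is at least `v_p(f·φ)`
    ((p : ℤ) ^ padicValNat p (f * φ) ∣ ((a' : ℤ) * c) ^ φ - (a : ℤ) ^ φ) ∧
    -- the quotient lies in `ℤ_p` and is `≡ λ·a⁻¹ (mod p^{n+1}·ℤ_p)`
    ∃ z : ℤ_[p],
      (z : ℚ_[p]) = ((((a' : ℤ) * c) ^ φ - (a : ℤ) ^ φ : ℤ) : ℚ_[p]) / ((f * φ : ℕ) : ℚ_[p]) ∧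
      ∃ t : ℤ_[p], z - (lam : ℤ_[p]) * (PadicInt.inv (a : ℤ_[p])) = (p : ℤ_[p]) ^ (n + 1) * t := by
  obtain ⟨hdvd, hdvd_two⟩ : p ^ (n + 1) ∣ q * p ^ n ∧ (p = 2 → p ^ (n + 2) ∣ q * p ^ n) := by
    subst hq
    split_ifs with hp2
    · subst hp2
      exact ⟨⟨2, by ring⟩, fun _ ↦ ⟨1, by ring⟩⟩
    · exact ⟨⟨1, by ring⟩, fun h ↦ absurd h hp2⟩
  have hvf : n + 1 ≤ padicValNat p f := (padicValNat_dvd_iff_le hf.ne').1 (hdvd.trans hmul)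
  have hvf_two : p = 2 → n + 1 < padicValNat p f :=
    fun hp2 ↦ (padicValNat_dvd_iff_le hf.ne').1 ((hdvd_two hp2).trans hmul)
  have hφ0 : φ ≠ 0 := by
    rw [hφ]
    exact (Nat.totient_pos.2 (Nat.pos_of_dvd_of_pos hmul hf)).ne'
  have hpa : p.Coprime a :=
    ha.symm.coprime_dvd_left ((dvd_pow_self p (by omega)).trans (hdvd.trans hmul))
  have heuler : (p : ℤ) ^ (n + 1) ∣ (a : ℤ) ^ φ - 1 := by
    have := (Nat.ModEq.pow_totient (ha.coprime_dvd_right hmul)).symm.dvd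
    rw [← hφ] at this
    push_cast at this
    exact (Int.natCast_dvd_natCast.2 hdvd).trans (by exact_mod_cast this)
  have hfx : (p : ℤ) ^ padicValNat p f ∣ lam * f :=
    (Int.natCast_dvd_natCast.2 pow_padicValNat_dvd).mul_left lam
  have key := pow_dvd_mul_add_pow_sub_pow_sub_mul hfx (by omega) hvf hvf_two hφ0 heuler
  rw [← padicValNat.mul hf.ne' hφ0, show lam * f + a = a' * c by linarith] at key
  have key' : (p : ℤ) ^ (padicValNat p (f * φ) + (n + 1)) ∣
      a * (((a' : ℤ) * c) ^ φ - (a : ℤ) ^ φ) - lam * ((f * φ : ℕ) : ℤ) := by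
    convert key using 2
    push_cast
    ring
  exact ⟨pow_padicValNat_dvd_of_pow_dvd_mul_sub hpa key',
    exists_padicInt_eq_div_of_pow_dvd_mul_sub (Nat.mul_ne_zero hf.ne' hφ0) hpa key'⟩

theorem statement9 (p : ℕ) [Fact p.Prime] (n : ℕ)
    (q : ℕ) (hq : q = if p = 2 then 4 else p)
    (φ : ℕ) (hφ : φ = (q * p ^ n).totient)
    (f : ℕ) (hf : 0 < f) (hmul : q * p ^ n ∣ f)
    (a c : ℕ) (ha1 : 1 ≤ a) (haf : a ≤ f) (ha : Nat.Coprime a f)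
    (hc : Nat.Coprime c f) (hcodd : Odd c)
    -- `a'` is the unique integer in `[1,f]` with `a'·c ≡ a (mod f)`
    (a' : ℕ) (ha'1 : 1 ≤ a') (ha'f : a' ≤ f) (ha'c : a' * c ≡ a [MOD f])
    -- `lam = λ := (a'·c − a)/f ∈ ℤ`
    (lam : ℤ) (hlam : lam * f = (a' : ℤ) * c - a) :
    -- the p-adic valuation of `(a'·c)^φ − a^φ` is at least `v_p(f·φ)`
    ((p : ℤ) ^ padicValNat p (f * φ) ∣ ((a' : ℤ) * c) ^ φ - (a : ℤ) ^ φ) ∧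
    -- the quotient lies in `ℤ_p` and is `≡ λ·a⁻¹ (mod p^{n+1}·ℤ_p)`
    ∃ z : ℤ_[p],
      (z : ℚ_[p]) = ((((a' : ℤ) * c) ^ φ - (a : ℤ) ^ φ : ℤ) : ℚ_[p]) / ((f * φ : ℕ) : ℚ_[p]) ∧
      ∃ t : ℤ_[p], z - (lam : ℤ_[p]) * (PadicInt.inv (a : ℤ_[p])) = (p : ℤ_[p]) ^ (n + 1) * t :=
  statement9_general p n q hq φ hφ f hf hmul a c ha a' lam hlam
end

section
/- Let p be a prime, q := p if p is odd and q := 4 if p = 2, let n ≥ 0, and φ := φ(q·pⁿ). Let m be a positive multiple of q·pⁿ, let ℓ be a prime number not dividing m (so in particular ℓ ≠ p), and set f := ℓ·m. Then π_{f,m}(A_f) − (1 − ℓ^{φ−1}·[σ_ℓ])·A_m lies in the ℤ_p-submodule p^{n+1}·ℤ_p[(ℤ/mℤ)ˣ] + (1 − [σ_{−1}])·ℤ_p[(ℤ/mℤ)ˣ] of ℚ_p[(ℤ/mℤ)ˣ]. -/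
open scoped BigOperators

/-- `A_f := (−1/(f·φ))·Σ_{1≤a≤f, gcd(a,f)=1} a^φ·[ā] ∈ ℚ_p[(ℤ/fℤ)ˣ]`. -/
noncomputable def aElt (p : ℕ) [Fact p.Prime] (φ f : ℕ) :
    MonoidAlgebra ℚ_[p] (ZMod f)ˣ :=
  (-(1 / ((f : ℚ_[p]) * (φ : ℚ_[p])))) •
    ∑ a ∈ Finset.Icc 1 f,
      if h : Nat.Coprime a f then
        ((a : ℚ_[p]) ^ φ) • MonoidAlgebra.single (ZMod.unitOfCoprime a h) (1 : ℚ_[p])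
      else 0

/-- The map `π_{f,m} : ℚ_p[(ℤ/fℤ)ˣ] → ℚ_p[(ℤ/mℤ)ˣ]` induced by reduction mod `m`. -/
noncomputable def projMapP (p : ℕ) [Fact p.Prime] (f m : ℕ) (h : m ∣ f) :
    MonoidAlgebra ℚ_[p] (ZMod f)ˣ →+* MonoidAlgebra ℚ_[p] (ZMod m)ˣ :=
  MonoidAlgebra.mapDomainRingHom ℚ_[p] (ZMod.unitsMap h)

/-!
Write `r` for the least positive representative of `g ∈ (ℤ/mℤ)ˣ`. Unfolding the definitions, the
coefficient at `g` of the difference is `-(ℓ m φ)⁻¹ · D(r)` with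
`D(r) = ∑_{j<ℓ} (r + j m)^φ - ℓ r^φ`: the lifts of `r` to `ℤ/ℓmℤ` are the `r + j m`, the one
that is not a unit is `ℓ · σ_ℓ⁻¹ r`, and its contribution cancels against the `σ_ℓ`-term.
Expanding binomially, `D(r) = φ m S₁ r^(φ-1) + ∑_{k≥2} C(φ,k) m^k S_k r^(φ-k)` with
`S_k = ∑_{j<ℓ} j^k`. Since `k C(φ,k)` is divisible by `φ` and `v_p(k) + 1 ≤ v_p(q)(k-1)`, every
term with `k ≥ 2` lies in `m φ p^(n+1) ℤ_p`; so `D(r) ∈ m φ ℤ_p`, and since `φ - 1` is odd, `m`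
divides `r^(φ-1) + (m-r)^(φ-1)` and `D(r) + D(m - r) ∈ m φ p^(n+1) ℤ_p`. An element of `ℚ_p[G]`
with integral coefficients whose coefficients at `g` and `-g` sum into `p^(n+1) ℤ_p` splits as
required, by choosing one element from each pair `{g, -g}`.
-/

open Finset

namespace MonoidAlgebra
variable {k G : Type*} [Ring k] [Group G]

theorem exists_eq_add_one_sub_single_mul (e : G) (he : e ≠ 1) (he2 : e * e = 1) (x : k[G]) :
    ∃ w z : k[G], (∀ g, w.coeff g = 0 ∨ w.coeff g = x.coeff g + x.coeff (e * g)) ∧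
      (∀ g, z.coeff g = 0 ∨ z.coeff g = x.coeff g) ∧
      x = w + (1 - single e 1) * z := by
  classical
  let P : G → Prop := fun g => WellOrderingRel g (e * g)
  have hPe : ∀ g, P (e * g) ↔ ¬ P g := by
    intro g
    have hne : g ≠ e * g := fun h => he (by simpa using congrArg (· * g⁻¹) h.symm)
    simp only [P, ← mul_assoc, he2, one_mul]
    rcases trichotomous_of WellOrderingRel g (e * g) with h | h | h
    · exact iff_of_false (asymm_of WellOrderingRel h) (not_not.mpr h)
    · exact absurd h hne
    · exact iff_of_true h (asymm_of WellOrderingRel h)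
  let z : k[G] := ofCoeff (x.coeff.filter P)
  have hz : ∀ g, z.coeff g = if P g then x.coeff g else 0 := fun g => Finsupp.filter_apply _ _ _
  have he_inv : e⁻¹ = e := inv_eq_of_mul_eq_one_right he2
  refine ⟨x - (1 - single e 1) * z, z, fun g => ?_, fun g => ?_, by abel⟩
  · by_cases hg : P g
    · exact .inl (by simp [sub_mul, he_inv, hz, hg, hPe])
    · exact .inr (by simp [sub_mul, he_inv, hz, hg, hPe])
  · rw [hz]; split_ifs <;> simp

theorem exists_eq_p_pow_smul_add_one_sub_single_mul {p : ℕ} [Fact p.Prime] (e : G) (he : e ≠ 1)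
    (he2 : e * e = 1) (N : ℕ) (x : MonoidAlgebra ℚ_[p] G) (hx : ∀ g, ‖x.coeff g‖ ≤ 1)
    (hxe : ∀ g, ‖x.coeff g + x.coeff (e * g)‖ ≤ ‖(p : ℚ_[p])‖ ^ N) :
    ∃ y z : MonoidAlgebra ℚ_[p] G,
      (∀ g, ∃ t : ℤ_[p], y.coeff g = (t : ℚ_[p])) ∧
      (∀ g, ∃ t : ℤ_[p], z.coeff g = (t : ℚ_[p])) ∧
      x = ((p : ℚ_[p]) ^ N) • y + (1 - single e 1) * z := by
  obtain ⟨w, z, hw, hz, rfl⟩ := exists_eq_add_one_sub_single_mul e he he2 x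
  have hp0 : (p : ℚ_[p]) ≠ 0 := Nat.cast_ne_zero.mpr (Fact.out : p.Prime).ne_zero
  refine ⟨((p : ℚ_[p]) ^ N)⁻¹ • w, z, fun g => ⟨⟨_, ?_⟩, rfl⟩, fun g => ⟨⟨_, ?_⟩, rfl⟩,
    by rw [smul_inv_smul₀ (pow_ne_zero N hp0)]⟩
  · rw [coeff_smul_apply, smul_eq_mul, norm_mul, norm_inv, norm_pow,
      inv_mul_le_iff₀ (pow_pos (norm_pos_iff.mpr hp0) N), mul_one]
    rcases hw g with h | h
    · simp [h]
    · rw [h]; exact hxe g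
  · rcases hz g with h | h
    · simp [h]
    · rw [h]; exact hx g

end MonoidAlgebra

namespace ZMod

theorem filter_Icc_natCast_eq_singleton_val {m : ℕ} [NeZero m] {x : ZMod m} (hx : x ≠ 0) :
    {a ∈ Icc 1 m | ((a : ℕ) : ZMod m) = x} = {x.val} := by
  ext a
  simp only [mem_filter, mem_Icc, mem_singleton]
  constructor
  · rintro ⟨⟨-, ham⟩, rfl⟩
    rcases ham.lt_or_eq with ham | ham
    · exact (val_cast_of_lt ham).symm
    · exact absurd (by rw [ham, natCast_self]) hx
  · rintro rfl
    exact ⟨⟨val_pos.mpr hx, (val_lt x).le⟩, natCast_zmod_val x⟩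

theorem filter_Icc_mul_natCast_eq_image {m : ℕ} [NeZero m] (ℓ : ℕ) {x : ZMod m} (hx : x ≠ 0) :
    {a ∈ Icc 1 (ℓ * m) | ((a : ℕ) : ZMod m) = x} = (range ℓ).image (fun j => x.val + j * m) := by
  have hpos := val_pos.mpr hx
  have hlt := val_lt x
  ext a
  simp only [mem_filter, mem_Icc, mem_image, mem_range]
  constructor
  · rintro ⟨⟨-, haℓ⟩, rfl⟩
    refine ⟨a / m, (Nat.div_lt_iff_lt_mul (NeZero.pos m)).mpr ?_, ?_⟩
    · exact haℓ.lt_of_ne fun h => hx (by rw [h, Nat.cast_mul, natCast_self, mul_zero])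
    · rw [val_natCast, Nat.mod_add_div']
  · rintro ⟨j, hj, rfl⟩
    refine ⟨⟨by omega, by nlinarith⟩, by simp⟩

theorem filter_Icc_mul_natCast_dvd_eq_singleton {m ℓ : ℕ} [NeZero m] (hℓ : ℓ.Coprime m)
    {x y : ZMod m} (hy : y ≠ 0) (hxy : ℓ * y = x) :
    {a ∈ Icc 1 (ℓ * m) | ((a : ℕ) : ZMod m) = x ∧ ℓ ∣ a} = {ℓ * y.val} := by
  have hpos := val_pos.mpr hy
  have hlt := val_lt y
  have hℓ0 : ℓ ≠ 0 := by
    rintro rfl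
    rw [Nat.coprime_zero_left] at hℓ
    omega
  ext a
  simp only [mem_filter, mem_Icc, mem_singleton]
  constructor
  · rintro ⟨⟨ha1, haℓ⟩, hax, b, rfl⟩
    have hb : (b : ZMod m) = y := by
      refine (isUnit_iff_coprime ℓ m |>.mpr hℓ).mul_left_cancel ?_
      rw [hxy, ← hax, Nat.cast_mul]
    have hbm : b < m := by
      refine (Nat.le_of_mul_le_mul_left haℓ (Nat.pos_of_ne_zero hℓ0)).lt_of_ne ?_
      rintro rfl
      exact hy (by rw [← hb, natCast_self])
    rw [← hb, val_cast_of_lt hbm]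
  · rintro rfl
    refine ⟨⟨?_, Nat.mul_le_mul_left ℓ hlt.le⟩, by simp [hxy], dvd_mul_right ℓ _⟩
    exact Nat.one_le_iff_ne_zero.mpr (mul_ne_zero hℓ0 hpos.ne')

theorem sum_Icc_coprime_mul_natCast_eq {M : Type*} [AddCommGroup M] {m ℓ : ℕ} [Fact (1 < m)]
    (hℓ : ℓ.Prime) (hnd : ¬ ℓ ∣ m) {g u : (ZMod m)ˣ} (hu : ℓ * (u : ZMod m) = g) (F : ℕ → M) :
    ∑ a ∈ Icc 1 (ℓ * m) with a.Coprime (ℓ * m) ∧ ((a : ℕ) : ZMod m) = g, F a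
      = ∑ j ∈ range ℓ, F ((g : ZMod m).val + j * m) - F (ℓ * (u : ZMod m).val) := by
  have hfilter : {a ∈ Icc 1 (ℓ * m) | a.Coprime (ℓ * m) ∧ ((a : ℕ) : ZMod m) = g}
      = {a ∈ {a ∈ Icc 1 (ℓ * m) | ((a : ℕ) : ZMod m) = g} | ¬ ℓ ∣ a} := by
    rw [filter_filter]
    refine filter_congr fun a _ => ?_
    rw [Nat.coprime_mul_iff_right]
    constructor
    · rintro ⟨⟨haℓ, -⟩, hag⟩
      exact ⟨hag, hℓ.coprime_iff_not_dvd.mp haℓ.symm⟩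
    · rintro ⟨hag, hℓa⟩
      exact ⟨⟨(hℓ.coprime_iff_not_dvd.mpr hℓa).symm,
        (isUnit_iff_coprime a m).mp (hag ▸ g.isUnit)⟩, hag⟩
  have hdvd : {a ∈ {a ∈ Icc 1 (ℓ * m) | ((a : ℕ) : ZMod m) = g} | ℓ ∣ a}
      = {ℓ * (u : ZMod m).val} := by
    rw [filter_filter]
    exact filter_Icc_mul_natCast_dvd_eq_singleton (hℓ.coprime_iff_not_dvd.mpr hnd) u.ne_zero hu
  rw [hfilter, eq_sub_iff_add_eq, ← sum_singleton F, ← hdvd, sum_filter_not_add_sum_filter,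
    filter_Icc_mul_natCast_eq_image ℓ g.ne_zero, sum_image]
  intro i _ j _ hij
  exact Nat.eq_of_mul_eq_mul_right (NeZero.pos m) (Nat.add_left_cancel hij)

theorem val_add_val_neg_one_mul {m : ℕ} [Fact (1 < m)] (g : (ZMod m)ˣ) :
    (g : ZMod m).val + ((-1 * g : (ZMod m)ˣ) : ZMod m).val = m := by
  rw [Units.val_mul, Units.val_neg, Units.val_one, neg_one_mul, neg_val, if_neg g.ne_zero]
  have := val_lt (g : ZMod m)
  omega

end ZMod

def powSumDefect {R : Type*} [CommRing R] (φ ℓ : ℕ) (m r : R) : R :=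
  ∑ j ∈ range ℓ, (r + j * m) ^ φ - ℓ * r ^ φ

theorem powSumDefect_eq {R : Type*} [CommRing R] {φ : ℕ} (hφ : φ ≠ 0) (ℓ : ℕ) (m r : R) :
    powSumDefect φ ℓ m r = φ * m * (∑ j ∈ range ℓ, (j : R)) * r ^ (φ - 1)
      + ∑ k ∈ Ico 2 (φ + 1),
          (φ.choose k : R) * m ^ k * (∑ j ∈ range ℓ, (j : R) ^ k) * r ^ (φ - k) := by
  have hexp : ∀ j : ℕ, (r + j * m) ^ φ
      = ∑ k ∈ range (φ + 1), (φ.choose k : R) * m ^ k * (j : R) ^ k * r ^ (φ - k) := by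
    intro j
    rw [add_comm, add_pow]
    exact sum_congr rfl fun k _ => by ring
  have hinner : ∀ k, ∑ j ∈ range ℓ, (φ.choose k : R) * m ^ k * (j : R) ^ k * r ^ (φ - k)
      = (φ.choose k : R) * m ^ k * (∑ j ∈ range ℓ, (j : R) ^ k) * r ^ (φ - k) := by
    intro k
    rw [← sum_mul, ← mul_sum]
  rw [powSumDefect, sum_congr rfl fun j _ => hexp j, sum_comm, range_eq_Ico,
    sum_eq_sum_Ico_succ_bot (by omega), sum_eq_sum_Ico_succ_bot (by omega)]
  simp only [hinner]
  simp

theorem Nat.succ_le_mul_sub_one_of_pow_le {p v k : ℕ} (hp : p.Prime) (hk : 2 ≤ k)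
    (hpv : p ^ v ≤ k) : v + 1 ≤ (if p = 2 then 2 else 1) * (k - 1) := by
  split_ifs with hp2
  · have := Nat.lt_two_pow_self (n := v)
    subst hp2
    omega
  · rcases Nat.eq_zero_or_pos v with rfl | hv
    · omega
    have hp3 : 3 ≤ p := hp.two_le.lt_of_ne' hp2
    have h3 : 1 + v * 2 ≤ 3 ^ v :=
      one_add_mul_le_pow_of_sq_nonneg (by positivity) (by positivity) (by positivity) v
    have : 3 ^ v ≤ p ^ v := Nat.pow_le_pow_left hp3 v
    omega

theorem two_lt_mul_pow {p q : ℕ} (hp : p.Prime) (hq : q = if p = 2 then 4 else p) (n : ℕ) :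
    2 < q * p ^ n := by
  have : 3 ≤ q := by
    split_ifs at hq with hp2
    · omega
    · exact hq ▸ hp.two_le.lt_of_ne' hp2
  nlinarith [Nat.one_le_pow n p hp.pos]

theorem pow_succ_dvd_of_mul_pow_dvd {p q n m : ℕ} (hq : q = if p = 2 then 4 else p)
    (hm : q * p ^ n ∣ m) : p ^ (n + 1) ∣ m := by
  have hpq : p ∣ q := by split_ifs at hq with hp2 <;> simp [hq, hp2]
  exact (pow_succ' p n ▸ mul_dvd_mul_right hpq (p ^ n)).trans hm

namespace Padic

variable {p : ℕ} [Fact p.Prime]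

theorem norm_natCast_le_of_dvd {a b : ℕ} (h : a ∣ b) : ‖(b : ℚ_[p])‖ ≤ ‖(a : ℚ_[p])‖ := by
  obtain ⟨c, rfl⟩ := h
  rw [Nat.cast_mul, norm_mul]
  exact mul_le_of_le_one_right (norm_nonneg _) (IsUltrametricDist.norm_natCast_le_one _ c)

theorem norm_choose_mul_le (φ k : ℕ) :
    ‖(φ.choose k : ℚ_[p])‖ * ‖(k : ℚ_[p])‖ ≤ ‖(φ : ℚ_[p])‖ := by
  rcases k with _ | k
  · simp
  rcases φ with _ | φ
  · simp
  have h := congrArg (fun t : ℕ => ‖(t : ℚ_[p])‖) (Nat.add_one_mul_choose_eq φ k)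
  simp only [Nat.cast_mul, norm_mul] at h
  rw [← h]
  exact mul_le_of_le_one_right (norm_nonneg _) (IsUltrametricDist.norm_natCast_le_one _ _)

theorem norm_natCast_eq_pow_of_not_dvd {v k : ℕ} (hk : ¬ p ∣ k) :
    ‖((p ^ v * k : ℕ) : ℚ_[p])‖ = ‖(p : ℚ_[p])‖ ^ v := by
  rw [Nat.cast_mul, norm_mul, norm_natCast_eq_one_iff.mpr
    ((Nat.Prime.coprime_iff_not_dvd Fact.out).mpr hk), mul_one, Nat.cast_pow, norm_pow]

theorem norm_pow_sub_one_le {q k : ℕ} (hq : q = if p = 2 then 4 else p) (hk : 2 ≤ k) :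
    ‖(q : ℚ_[p])‖ ^ (k - 1) ≤ ‖(k : ℚ_[p])‖ * ‖(p : ℚ_[p])‖ := by
  have hp : p.Prime := Fact.out
  obtain ⟨v, k', hk', rfl⟩ := Nat.exists_eq_pow_mul_and_not_dvd (show k ≠ 0 by omega) p hp.ne_one
  have hq' : ‖(q : ℚ_[p])‖ = ‖(p : ℚ_[p])‖ ^ (if p = 2 then 2 else 1) := by
    split_ifs at hq ⊢ with hp2
    · subst hq hp2
      rw [← norm_pow]
      norm_num
    · rw [hq, pow_one]
  have hpv : p ^ v ≤ p ^ v * k' :=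
    Nat.le_mul_of_pos_right _ (Nat.pos_of_ne_zero (by rintro rfl; simp at hk'))
  rw [hq', norm_natCast_eq_pow_of_not_dvd hk', ← pow_succ, ← pow_mul]
  exact pow_le_pow_of_le_one (norm_nonneg _) norm_p_lt_one.le
    (Nat.succ_le_mul_sub_one_of_pow_le hp hk hpv)

variable {q n m : ℕ}

theorem norm_natCast_pow_sub_one_le (hq : q = if p = 2 then 4 else p) (hm : q * p ^ n ∣ m)
    {k : ℕ} (hk : 2 ≤ k) :
    ‖(m : ℚ_[p])‖ ^ (k - 1) ≤ ‖(k : ℚ_[p])‖ * ‖(p : ℚ_[p])‖ ^ (n + 1) := by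
  have hp1 : ‖(p : ℚ_[p])‖ ^ n ≤ 1 := pow_le_one₀ (norm_nonneg _) norm_p_lt_one.le
  calc ‖(m : ℚ_[p])‖ ^ (k - 1) ≤ (‖(q : ℚ_[p])‖ * ‖(p : ℚ_[p])‖ ^ n) ^ (k - 1) := by
        gcongr
        simpa using norm_natCast_le_of_dvd (p := p) hm
    _ = ‖(q : ℚ_[p])‖ ^ (k - 1) * (‖(p : ℚ_[p])‖ ^ n) ^ (k - 1) := mul_pow _ _ _
    _ ≤ (‖(k : ℚ_[p])‖ * ‖(p : ℚ_[p])‖) * ‖(p : ℚ_[p])‖ ^ n := by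
        gcongr
        · exact norm_pow_sub_one_le hq hk
        · exact pow_le_of_le_one (by positivity) hp1 (by omega)
    _ = ‖(k : ℚ_[p])‖ * ‖(p : ℚ_[p])‖ ^ (n + 1) := by ring

theorem norm_choose_mul_pow_le (hq : q = if p = 2 then 4 else p) (hm : q * p ^ n ∣ m)
    (φ : ℕ) {k : ℕ} (hk : 2 ≤ k) :
    ‖(φ.choose k : ℚ_[p]) * (m : ℚ_[p]) ^ k‖
      ≤ ‖(m : ℚ_[p])‖ * ‖(φ : ℚ_[p])‖ * ‖(p : ℚ_[p])‖ ^ (n + 1) := by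
  calc ‖(φ.choose k : ℚ_[p]) * (m : ℚ_[p]) ^ k‖
        = ‖(φ.choose k : ℚ_[p])‖ * ‖(m : ℚ_[p])‖ ^ (k - 1) * ‖(m : ℚ_[p])‖ := by
        rw [norm_mul, norm_pow, mul_assoc, ← pow_succ, Nat.sub_add_cancel (by omega)]
    _ ≤ ‖(φ.choose k : ℚ_[p])‖ * (‖(k : ℚ_[p])‖ * ‖(p : ℚ_[p])‖ ^ (n + 1)) * ‖(m : ℚ_[p])‖ := by
        gcongr
        exact norm_natCast_pow_sub_one_le hq hm hk
    _ = ‖(φ.choose k : ℚ_[p])‖ * ‖(k : ℚ_[p])‖ * ‖(m : ℚ_[p])‖ * ‖(p : ℚ_[p])‖ ^ (n + 1) := by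
        ring
    _ ≤ ‖(φ : ℚ_[p])‖ * ‖(m : ℚ_[p])‖ * ‖(p : ℚ_[p])‖ ^ (n + 1) := by
        gcongr
        exact norm_choose_mul_le φ k
    _ = ‖(m : ℚ_[p])‖ * ‖(φ : ℚ_[p])‖ * ‖(p : ℚ_[p])‖ ^ (n + 1) := by ring

theorem norm_sum_Ico_two_le (hq : q = if p = 2 then 4 else p) (hm : q * p ^ n ∣ m)
    (φ ℓ r : ℕ) :
    ‖∑ k ∈ Ico 2 (φ + 1), (φ.choose k : ℚ_[p]) * (m : ℚ_[p]) ^ k *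
        (∑ j ∈ range ℓ, (j : ℚ_[p]) ^ k) * (r : ℚ_[p]) ^ (φ - k)‖
      ≤ ‖(m : ℚ_[p])‖ * ‖(φ : ℚ_[p])‖ * ‖(p : ℚ_[p])‖ ^ (n + 1) := by
  refine IsUltrametricDist.norm_sum_le_of_forall_le_of_nonneg (by positivity) fun k hk => ?_
  have hS : ‖∑ j ∈ range ℓ, (j : ℚ_[p]) ^ k‖ ≤ 1 := by
    exact_mod_cast IsUltrametricDist.norm_natCast_le_one ℚ_[p] (∑ j ∈ range ℓ, j ^ k)
  have hr : ‖(r : ℚ_[p]) ^ (φ - k)‖ ≤ 1 := by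
    exact_mod_cast IsUltrametricDist.norm_natCast_le_one ℚ_[p] (r ^ (φ - k))
  rw [norm_mul, norm_mul]
  calc _ ≤ ‖(φ.choose k : ℚ_[p]) * (m : ℚ_[p]) ^ k‖ * 1 * 1 := by gcongr
    _ ≤ _ := by
        rw [mul_one, mul_one]
        exact norm_choose_mul_pow_le hq hm φ (mem_Ico.mp hk).1

theorem norm_powSumDefect_le (hq : q = if p = 2 then 4 else p) (hm : q * p ^ n ∣ m)
    {φ : ℕ} (hφ : φ ≠ 0) (ℓ r : ℕ) :
    ‖powSumDefect φ ℓ (m : ℚ_[p]) r‖ ≤ ‖(m : ℚ_[p])‖ * ‖(φ : ℚ_[p])‖ := by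
  have hp1 : ‖(p : ℚ_[p])‖ ^ (n + 1) ≤ 1 := pow_le_one₀ (norm_nonneg _) norm_p_lt_one.le
  rw [powSumDefect_eq hφ]
  refine (IsUltrametricDist.norm_add_le_max _ _).trans (max_le ?_ ?_)
  · have hS : ‖∑ j ∈ range ℓ, (j : ℚ_[p])‖ ≤ 1 := by
      rw [← Nat.cast_sum]
      exact IsUltrametricDist.norm_natCast_le_one ℚ_[p] _
    have hr : ‖(r : ℚ_[p]) ^ (φ - 1)‖ ≤ 1 := by
      exact_mod_cast IsUltrametricDist.norm_natCast_le_one ℚ_[p] (r ^ (φ - 1))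
    rw [norm_mul, norm_mul, norm_mul]
    calc _ ≤ ‖(φ : ℚ_[p])‖ * ‖(m : ℚ_[p])‖ * 1 * 1 := by gcongr
      _ = _ := by ring
  · calc _ ≤ ‖(m : ℚ_[p])‖ * ‖(φ : ℚ_[p])‖ * ‖(p : ℚ_[p])‖ ^ (n + 1) :=
          norm_sum_Ico_two_le hq hm φ ℓ r
      _ ≤ ‖(m : ℚ_[p])‖ * ‖(φ : ℚ_[p])‖ * 1 := by gcongr
      _ = _ := mul_one _

theorem norm_powSumDefect_add_le (hq : q = if p = 2 then 4 else p) (hm : q * p ^ n ∣ m)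
    {φ : ℕ} (hφ : φ ≠ 0) (hφ2 : Even φ) (ℓ : ℕ) {r s : ℕ} (hrs : r + s = m) :
    ‖powSumDefect φ ℓ (m : ℚ_[p]) r + powSumDefect φ ℓ (m : ℚ_[p]) s‖
      ≤ ‖(m : ℚ_[p])‖ * ‖(φ : ℚ_[p])‖ * ‖(p : ℚ_[p])‖ ^ (n + 1) := by
  have hmp : ‖(m : ℚ_[p])‖ ≤ ‖(p : ℚ_[p])‖ ^ (n + 1) := by
    have := norm_natCast_le_of_dvd (p := p) (pow_succ_dvd_of_mul_pow_dvd hq hm)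
    rwa [Nat.cast_pow, norm_pow] at this
  have hodd : m ∣ r ^ (φ - 1) + s ^ (φ - 1) :=
    hrs ▸ Odd.nat_add_dvd_pow_add_pow r s (Nat.Even.sub_odd (by omega) hφ2 odd_one)
  have hS : ‖∑ j ∈ range ℓ, (j : ℚ_[p])‖ ≤ 1 := by
    rw [← Nat.cast_sum]
    exact IsUltrametricDist.norm_natCast_le_one ℚ_[p] _
  rw [powSumDefect_eq hφ, powSumDefect_eq hφ, add_add_add_comm, ← mul_add]
  refine (IsUltrametricDist.norm_add_le_max _ _).trans (max_le ?_ ?_)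
  · rw [norm_mul, norm_mul, norm_mul]
    calc _ ≤ ‖(φ : ℚ_[p])‖ * ‖(m : ℚ_[p])‖ * 1 * ‖(p : ℚ_[p])‖ ^ (n + 1) := by
          gcongr
          exact_mod_cast (norm_natCast_le_of_dvd hodd).trans hmp
      _ = _ := by ring
  · exact (IsUltrametricDist.norm_add_le_max _ _).trans
      (max_le (norm_sum_Ico_two_le hq hm φ ℓ r) (norm_sum_Ico_two_le hq hm φ ℓ s))

theorem norm_neg_one_div_mul {ℓ m φ : ℕ} (hℓ : ¬ p ∣ ℓ) (a : ℚ_[p]) :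
    ‖-(1 / ((ℓ : ℚ_[p]) * m * φ)) * a‖ = ‖a‖ / (‖(m : ℚ_[p])‖ * ‖(φ : ℚ_[p])‖) := by
  rw [norm_mul, norm_neg, norm_div, norm_one, norm_mul, norm_mul,
    norm_natCast_eq_one_iff.mpr ((Nat.Prime.coprime_iff_not_dvd Fact.out).mpr hℓ)]
  ring

end Padic

section coefficients

variable {p : ℕ} [Fact p.Prime]

theorem coeff_projMapP_aElt (φ : ℕ) {f m : ℕ} (hd : m ∣ f) (g : (ZMod m)ˣ) :
    (projMapP p f m hd (aElt p φ f)).coeff g = -(1 / ((f : ℚ_[p]) * φ)) *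
      ∑ a ∈ Icc 1 f with a.Coprime f ∧ ((a : ℕ) : ZMod m) = g, (a : ℚ_[p]) ^ φ := by
  have hsmul : ∀ (c : ℚ_[p]) x, projMapP p f m hd (c • x) = c • projMapP p f m hd x :=
    fun c x => MonoidAlgebra.mapDomain_smul _ c x
  rw [aElt, hsmul, MonoidAlgebra.coeff_smul_apply, smul_eq_mul, map_sum, MonoidAlgebra.coeff_sum,
    sum_apply', sum_filter]
  congr 1
  refine sum_congr rfl fun a _ => ?_
  by_cases h : a.Coprime f
  · have : ZMod.unitsMap hd (ZMod.unitOfCoprime a h) = g ↔ (a : ZMod m) = g := by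
      simp [Units.ext_iff, ZMod.unitsMap_val, ZMod.cast_natCast hd]
    rw [dif_pos h, hsmul, projMapP, MonoidAlgebra.mapDomainRingHom_apply,
      MonoidAlgebra.mapDomain_single, MonoidAlgebra.coeff_smul_apply, MonoidAlgebra.coeff_single,
      Finsupp.single_apply]
    by_cases he : (a : ZMod m) = g <;> simp [this, he, h]
  · simp [h]

theorem projMapP_self (m : ℕ) (x : MonoidAlgebra ℚ_[p] (ZMod m)ˣ) :
    projMapP p m m dvd_rfl x = x := by
  simp [projMapP, ZMod.unitsMap_self]

theorem coeff_aElt {m : ℕ} [Fact (1 < m)] (φ : ℕ) (g : (ZMod m)ˣ) :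
    (aElt p φ m).coeff g = -(1 / ((m : ℚ_[p]) * φ)) * ((g : ZMod m).val : ℚ_[p]) ^ φ := by
  have hfilter : {a ∈ Icc 1 m | a.Coprime m ∧ ((a : ℕ) : ZMod m) = g} = {(g : ZMod m).val} := by
    rw [← ZMod.filter_Icc_natCast_eq_singleton_val g.ne_zero]
    refine filter_congr fun a _ => and_iff_right_of_imp fun hag => ?_
    exact (ZMod.isUnit_iff_coprime a m).mp (hag ▸ g.isUnit)
  rw [← projMapP_self m (aElt p φ m), coeff_projMapP_aElt, hfilter, sum_singleton]

theorem coeff_projMapP_aElt_sub {φ m ℓ : ℕ} [Fact (1 < m)] (hφ : φ ≠ 0) (hℓ : ℓ.Prime)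
    (hnd : ¬ ℓ ∣ m) (g : (ZMod m)ˣ) :
    (projMapP p (ℓ * m) m (dvd_mul_left m ℓ) (aElt p φ (ℓ * m))
        - (1 - ((ℓ : ℚ_[p]) ^ (φ - 1)) •
              MonoidAlgebra.single
                (ZMod.unitOfCoprime ℓ (hℓ.coprime_iff_not_dvd.mpr hnd)) (1 : ℚ_[p]))
          * aElt p φ m).coeff g
      = -(1 / ((ℓ : ℚ_[p]) * m * φ)) * powSumDefect φ ℓ (m : ℚ_[p]) ((g : ZMod m).val) := by
  have hcop : ℓ.Coprime m := hℓ.coprime_iff_not_dvd.mpr hnd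
  have hu : ℓ * (((ZMod.unitOfCoprime ℓ hcop)⁻¹ * g : (ZMod m)ˣ) : ZMod m) = g := by
    rw [← ZMod.coe_unitOfCoprime ℓ hcop, ← Units.val_mul, mul_inv_cancel_left]
  rw [MonoidAlgebra.coeff_sub, Finsupp.sub_apply, coeff_projMapP_aElt,
    ZMod.sum_Icc_coprime_mul_natCast_eq hℓ hnd hu, sub_mul, one_mul, MonoidAlgebra.coeff_sub,
    Finsupp.sub_apply, smul_mul_assoc, MonoidAlgebra.coeff_smul_apply,
    MonoidAlgebra.coeff_single_mul_apply, coeff_aElt, coeff_aElt, powSumDefect]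
  have hℓ0 : (ℓ : ℚ_[p]) ≠ 0 := Nat.cast_ne_zero.mpr hℓ.ne_zero
  have hm0 : (m : ℚ_[p]) ≠ 0 := Nat.cast_ne_zero.mpr (NeZero.ne m)
  have hφ0 : (φ : ℚ_[p]) ≠ 0 := Nat.cast_ne_zero.mpr hφ
  have hpow : (ℓ : ℚ_[p]) ^ φ = (ℓ : ℚ_[p]) ^ (φ - 1) * ℓ := by
    rw [← pow_succ, Nat.sub_add_cancel (Nat.one_le_iff_ne_zero.mpr hφ)]
  push_cast [mul_pow, smul_eq_mul]
  rw [hpow]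
  field_simp
  ring

end coefficients

theorem statement11 (p : ℕ) [Fact p.Prime] (n : ℕ)
    (q : ℕ) (hq : q = if p = 2 then 4 else p)
    (φ : ℕ) (hφ : φ = (q * p ^ n).totient)
    (m : ℕ) (hm : 0 < m) (hmul : q * p ^ n ∣ m)
    (ℓ : ℕ) (hℓ : ℓ.Prime) (hnd : ¬ ℓ ∣ m) :
    -- `π_{f,m}(A_f) − (1 − ℓ^{φ−1}·[σ_ℓ])·A_m ∈ p^{n+1}·ℤ_p[(ℤ/mℤ)ˣ] + (1 − [σ_{−1}])·ℤ_p[(ℤ/mℤ)ˣ]`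
    ∃ y z : MonoidAlgebra ℚ_[p] (ZMod m)ˣ,
      (∀ g : (ZMod m)ˣ, ∃ t : ℤ_[p], y.coeff g = (t : ℚ_[p])) ∧
      (∀ g : (ZMod m)ˣ, ∃ t : ℤ_[p], z.coeff g = (t : ℚ_[p])) ∧
      projMapP p (ℓ * m) m (dvd_mul_left m ℓ) (aElt p φ (ℓ * m))
        - (1 - ((ℓ : ℚ_[p]) ^ (φ - 1)) •
              MonoidAlgebra.single
                (ZMod.unitOfCoprime ℓ (hℓ.coprime_iff_not_dvd.mpr hnd)) (1 : ℚ_[p]))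
          * aElt p φ m
      = ((p : ℚ_[p]) ^ (n + 1)) • y
        + (1 - MonoidAlgebra.single (-1 : (ZMod m)ˣ) (1 : ℚ_[p])) * z := by
  have hp : p.Prime := Fact.out
  have hqpn : 2 < q * p ^ n := two_lt_mul_pow hp hq n
  have : Fact (2 < m) := ⟨hqpn.trans_le (Nat.le_of_dvd hm hmul)⟩
  have : Fact (1 < m) := ⟨one_lt_two.trans Fact.out⟩
  have hφ0 : φ ≠ 0 := hφ ▸ (Nat.totient_pos.mpr (by omega)).ne'
  have hφ2 : Even φ := hφ ▸ Nat.totient_even hqpn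
  have hpℓ : ¬ p ∣ ℓ := fun h => hnd <| (Nat.prime_dvd_prime_iff_eq hp hℓ).mp h ▸
    (dvd_pow_self p n.succ_ne_zero).trans (pow_succ_dvd_of_mul_pow_dvd hq hmul)
  have hmφ : 0 < ‖(m : ℚ_[p])‖ * ‖(φ : ℚ_[p])‖ :=
    mul_pos (norm_pos_iff.mpr (Nat.cast_ne_zero.mpr hm.ne'))
      (norm_pos_iff.mpr (Nat.cast_ne_zero.mpr hφ0))
  refine MonoidAlgebra.exists_eq_p_pow_smul_add_one_sub_single_mul (-1)
    (fun h => ZMod.neg_one_ne_one (congrArg Units.val h)) (by simp) (n + 1) _ (fun g => ?_)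
    (fun g => ?_)
  · rw [coeff_projMapP_aElt_sub hφ0 hℓ hnd, Padic.norm_neg_one_div_mul hpℓ, div_le_one hmφ]
    exact Padic.norm_powSumDefect_le hq hmul hφ0 ℓ _
  · rw [coeff_projMapP_aElt_sub hφ0 hℓ hnd, coeff_projMapP_aElt_sub hφ0 hℓ hnd, ← mul_add,
      Padic.norm_neg_one_div_mul hpℓ, div_le_iff₀' hmφ]
    exact Padic.norm_powSumDefect_add_le hq hmul hφ0 hφ2 ℓ (ZMod.val_add_val_neg_one_mul g)
end
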